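/- arXiv:1601.00438 — 8 statements merged into one kernel-verified Lean document; each statement's English description precedes it below -/
import Mathlib

section
/- Any min-plus polynomial function of degree n, \(\hat P(y)=\min_{0\le k\le n}(P_k+ky)\) with \(P_n\ne +\infty\), can be factored in a unique way as \(\hat P(y)=P_n+\sum_{i=1}^n \min(y,c_i)\) for some \(c_1\le\cdots\le c_n\in\mathbb{R}\cup\{+\infty\}\). -/
/-!
Existence, by induction on `n`: splitting off `P₀` gives `P̂(y) = min(P₀, g(y))` with
`g(y) = y + Q̂(y)`, where `Q̂ = P_n + ∑ min(y, cᵢ)` is the factored polynomial of the shifted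
coefficients `P_{k+1}`. On `ℝ ∪ {+∞}` the map `g` is monotone and, by the intermediate value
theorem, onto; for `t` with `g(t) = P₀` monotonicity gives `min(P₀, g(y)) = g(min(y, t))`, which
is the factored form with roots `min(cᵢ, t)` and `t`.

Uniqueness: for monotone `c`, the reals `y` with `∑ min(y, cᵢ) = n y` are exactly those with
`y ≤ c₁`, so the smallest root is determined by the function; cancel it and induct.
-/

open scoped Classical

/-- The min-plus polynomial function `ŷ ↦ min_{0 ≤ k ≤ n} (P_k + k y)`. -/
noncomputable def tropEval (P : ℕ → WithTop ℝ) (n : ℕ) (y : ℝ) : WithTop ℝ :=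
  (Finset.range (n + 1)).inf fun k => P k + (((k : ℝ) * y : ℝ) : WithTop ℝ)

open Finset Function

noncomputable def factoredEval {n : ℕ} (p : WithTop ℝ) (c : Fin n → WithTop ℝ) (x : WithTop ℝ) :
    WithTop ℝ :=
  p + ∑ i, min x (c i)

theorem Fin.monotone_snoc {α : Type*} [Preorder α] {n : ℕ} {f : Fin n → α} {a : α}
    (hf : Monotone f) (ha : ∀ i, f i ≤ a) : Monotone (Fin.snoc f a : Fin (n + 1) → α) := by
  intro i j hij
  cases j using Fin.lastCases with
  | last => cases i using Fin.lastCases <;> simp [ha]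
  | cast j =>
    cases i using Fin.lastCases with
    | last => exact absurd hij (Fin.castSucc_lt_last j).not_ge
    | cast i => simpa using hf (by simpa using hij)

theorem WithTop.coe_min_untopD (y : ℝ) (c : WithTop ℝ) :
    ((min y (c.untopD y) : ℝ) : WithTop ℝ) = min (y : WithTop ℝ) c := by
  cases c <;> simp

theorem monotone_min_untopD (c : WithTop ℝ) : Monotone fun y : ℝ => min y (c.untopD y) := by
  intro y y' h
  cases c <;> simp [h]

theorem continuous_min_untopD (c : WithTop ℝ) : Continuous fun y : ℝ => min y (c.untopD y) := by
  cases c <;> simp <;> fun_prop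

theorem surjective_id_add_of_monotone {ψ : ℝ → ℝ} (hmono : Monotone ψ) (hcont : Continuous ψ) :
    Surjective fun y => y + ψ y := by
  intro a
  have hlo : min 0 (a - ψ 0) + ψ (min 0 (a - ψ 0)) ≤ a := by
    linarith [hmono (min_le_left 0 (a - ψ 0)), min_le_right 0 (a - ψ 0)]
  have hhi : a ≤ max 0 (a - ψ 0) + ψ (max 0 (a - ψ 0)) := by
    linarith [hmono (le_max_left 0 (a - ψ 0)), le_max_right 0 (a - ψ 0)]
  obtain ⟨y, -, hy⟩ := intermediate_value_Icc min_le_max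
    (continuous_id.add hcont).continuousOn ⟨hlo, hhi⟩
  exact ⟨y, hy⟩

theorem tropEval_zero (P : ℕ → WithTop ℝ) (y : ℝ) : tropEval P 0 y = P 0 := by
  simp [tropEval]

theorem tropEval_succ (P : ℕ → WithTop ℝ) (n : ℕ) (y : ℝ) :
    tropEval P (n + 1) y = min (P 0) (y + tropEval (fun k => P (k + 1)) n y) := by
  rw [tropEval, range_add_one', inf_insert, inf_map, tropEval,
    apply_inf_eq_inf_comp (fun z => (y : WithTop ℝ) + z) (fun _ _ => add_min _ _ _) (add_top _)]
  congr 1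
  · simp
  · congr 1
    funext k
    show P (k + 1) + ((((k + 1 : ℕ) : ℝ) * y : ℝ) : WithTop ℝ) =
      y + (P (k + 1) + ((k * y : ℝ) : WithTop ℝ))
    rw [add_left_comm, ← WithTop.coe_add]
    congr 2
    push_cast
    ring

section factoredEval

variable {n : ℕ} {p : WithTop ℝ} {c : Fin n → WithTop ℝ}

theorem monotone_factoredEval : Monotone (factoredEval p c) := fun _ _ h =>
  add_le_add_right (sum_le_sum fun i _ => min_le_min_right (c i) h) p

theorem surjective_id_add_factoredEval (hp : p ≠ ⊤) :
    Surjective fun x => x + factoredEval p c x := by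
  lift p to ℝ using hp
  intro a
  induction a using WithTop.recTopCoe with
  | top => exact ⟨⊤, top_add _⟩
  | coe r =>
    obtain ⟨y, hy⟩ := surjective_id_add_of_monotone
      (ψ := fun y => p + ∑ i, min y ((c i).untopD y))
      (fun _ _ h => add_le_add_right (sum_le_sum fun i _ => monotone_min_untopD (c i) h) p)
      (continuous_const.add (continuous_finsetSum _ fun i _ => continuous_min_untopD (c i))) r
    refine ⟨y, ?_⟩
    simp only [← hy, factoredEval, ← WithTop.coe_min_untopD]
    push_cast
    rfl

theorem factoredEval_snoc (t x : WithTop ℝ) :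
    factoredEval p (Fin.snoc (fun i => min (c i) t) t) x =
      min x t + factoredEval p c (min x t) := by
  simp only [factoredEval, Fin.sum_univ_castSucc, Fin.snoc_castSucc, Fin.snoc_last]
  simp only [min_left_comm x (c _) t, min_comm (c _) (min x t)]
  rw [add_comm _ (min x t), add_left_comm]

theorem exists_min_add_factoredEval_eq (hp : p ≠ ⊤) (hc : Monotone c) (a : WithTop ℝ) :
    ∃ c' : Fin (n + 1) → WithTop ℝ, Monotone c' ∧
      ∀ x, min a (x + factoredEval p c x) = factoredEval p c' x := by
  obtain ⟨t, rfl⟩ := surjective_id_add_factoredEval (c := c) hp a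
  refine ⟨Fin.snoc (fun i => min (c i) t) t,
    Fin.monotone_snoc (hc.min monotone_const) fun i => min_le_right _ _, fun x => ?_⟩
  rw [factoredEval_snoc, min_comm x]
  exact ((monotone_id.add monotone_factoredEval).map_min).symm

end factoredEval

theorem exists_monotone_tropEval_eq_factoredEval (n : ℕ) (P : ℕ → WithTop ℝ) (hP : P n ≠ ⊤) :
    ∃ c : Fin n → WithTop ℝ, Monotone c ∧
      ∀ y : ℝ, tropEval P n y = factoredEval (P n) c y := by
  induction n generalizing P with
  | zero =>
    exact ⟨finZeroElim, fun i => i.elim0, fun y => by simp [tropEval_zero, factoredEval]⟩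
  | succ n ih =>
    obtain ⟨c, hc, hPc⟩ := ih (fun k => P (k + 1)) hP
    obtain ⟨c', hc', hc'c⟩ := exists_min_add_factoredEval_eq hP hc (P 0)
    exact ⟨c', hc', fun y => by rw [tropEval_succ, hPc, hc'c]⟩

theorem sum_min_eq_card_nsmul_iff {ι : Type*} [Fintype ι] (c : ι → WithTop ℝ) (y : ℝ) :
    ∑ i, min (y : WithTop ℝ) (c i) = Fintype.card ι • (y : WithTop ℝ) ↔
      ∀ i, (y : WithTop ℝ) ≤ c i := by
  simp_rw [← WithTop.coe_min_untopD, ← WithTop.coe_sum, ← WithTop.coe_nsmul, WithTop.coe_inj,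
    ← card_univ, ← sum_const, sum_eq_sum_iff_of_le fun i _ => min_le_left _ _, mem_univ,
    true_imp_iff]
  refine forall_congr' fun i => ?_
  rw [← WithTop.coe_inj, WithTop.coe_min_untopD, min_eq_left_iff]

theorem eq_of_sum_min_eq_sum_min {n : ℕ} {c c' : Fin n → WithTop ℝ}
    (hc : Monotone c) (hc' : Monotone c')
    (h : ∀ y : ℝ, ∑ i, min (y : WithTop ℝ) (c i) = ∑ i, min (y : WithTop ℝ) (c' i)) : c = c' := by
  induction n with
  | zero => exact funext fun i => i.elim0
  | succ n ih =>
    have le_head_iff {d : Fin (n + 1) → WithTop ℝ} (hd : Monotone d) (y : ℝ) :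
        (y : WithTop ℝ) ≤ d 0 ↔ ∀ i, (y : WithTop ℝ) ≤ d i :=
      ⟨fun hy i => hy.trans (hd (Fin.zero_le i)), fun hy => hy 0⟩
    have head : c 0 = c' 0 := WithTop.eq_of_forall_coe_le_iff fun y => by
      rw [le_head_iff hc, le_head_iff hc', ← sum_min_eq_card_nsmul_iff,
        ← sum_min_eq_card_nsmul_iff, h]
    have tail : Fin.tail c = Fin.tail c' := by
      refine ih (hc.comp Fin.strictMono_succ.monotone) (hc'.comp Fin.strictMono_succ.monotone)
        fun y => ?_
      have hy := h y
      rw [Fin.sum_univ_succ, Fin.sum_univ_succ, head] at hy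
      exact WithTop.add_left_cancel (WithTop.coe_min_untopD y _ ▸ WithTop.coe_ne_top) hy
    rw [← Fin.cons_self_tail c, ← Fin.cons_self_tail c', head, tail]

/-- Cuninghame-Green–Meijer: any min-plus polynomial function of degree `n`
factors uniquely as `P_n + ∑ min(y, c_i)` with `c_1 ≤ ⋯ ≤ c_n`. -/
theorem stmt_0 (n : ℕ) (P : ℕ → WithTop ℝ) (hP : P n ≠ ⊤) :
    ∃! c : Fin n → WithTop ℝ, Monotone c ∧
      ∀ y : ℝ, tropEval P n y = P n + ∑ i : Fin n, min (y : WithTop ℝ) (c i) := by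
  obtain ⟨c, hc, hPc⟩ := exists_monotone_tropEval_eq_factoredEval n P hP
  refine ⟨c, ⟨hc, hPc⟩, fun c' ⟨hc', hPc'⟩ => eq_of_sum_min_eq_sum_min hc' hc fun y => ?_⟩
  exact WithTop.add_left_cancel hP ((hPc' y).symm.trans (hPc y))
end

section
/- The finite tropical roots of a formal min-plus polynomial P coincide with the opposites of the slopes of the affine pieces of the lower convex hull of the points \((k,P_k)\) for \(\mathrm{val}\,P\le k\le \deg P\), and the multiplicity of a root c equals the horizontal length of the interval on which this convex hull has slope \(-c\). -/
/-!
Write `P̂(y) = P_n + ∑ᵢ min(y, cᵢ)`. An affine minorant of slope `-y` of the points `(k, P_k)`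
has intercept at most `P̂(y)`, so `vex P` is the Legendre transform `z ↦ sup_y (P̂(y) - z y)`.
The function `y ↦ P̂(y) - z y` is concave with right slope `#{cᵢ > y} - z` and left slope
`#{cᵢ ≥ y} - z`; hence `y = x` maximises it exactly for `#{cᵢ > x} ≤ z ≤ #{cᵢ ≥ x}`, i.e. the
supporting line of slope `-x` touches `vex P` exactly on an interval of length `#{cᵢ = x}`.
Comparing the growth of `P̂(y) = min_k (P_k + k y)` as `y → +∞` shows `#{cᵢ = +∞} = val P`,
so this interval lies in `[val P, deg P]`. Parallel supporting lines coincide, which gives the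
converse.
-/

open scoped Classical

/-- The (lower) convex hull of the map `k ↦ P_k` (with value `+∞` off the integers
`0,…,n`), expressed as the supremum of the affine minorants of the points
`(k, P_k)`, `0 ≤ k ≤ n`, `P_k ≠ +∞`.  Its graph is the Newton polygon of `P`. -/
noncomputable def vexFn (P : ℕ → WithTop ℝ) (n : ℕ) (x : ℝ) : ℝ :=
  sSup {t : ℝ | ∃ α β : ℝ,
    (∀ k ≤ n, ∀ r : ℝ, P k = (r : WithTop ℝ) → α * (k : ℝ) + β ≤ r) ∧ t = α * x + β}

open Filter Topology Set
open scoped Finset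

section Legendre

variable {g : ℝ → ℝ} {z : ℝ}

noncomputable def legendre (g : ℝ → ℝ) (z : ℝ) : ℝ := sSup (Set.range fun y => g y - z * y)

theorem sub_mul_le_legendre (hg : BddAbove (Set.range fun y => g y - z * y)) (y : ℝ) :
    g y - z * y ≤ legendre g z :=
  le_csSup hg ⟨y, rfl⟩

theorem legendre_eq_iff (hg : BddAbove (Set.range fun y => g y - z * y)) {ys : ℝ} :
    legendre g z = g ys - z * ys ↔ ∀ y, g y - z * y ≤ g ys - z * ys := by
  refine ⟨fun h y => h ▸ sub_mul_le_legendre hg y, fun h => IsGreatest.csSup_eq ⟨⟨ys, rfl⟩, ?_⟩⟩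
  rintro _ ⟨y, rfl⟩
  exact h y

end Legendre

section TropEval

variable {P : ℕ → WithTop ℝ} {n : ℕ}

theorem tropEval_le {k : ℕ} (hk : k ≤ n) (y : ℝ) :
    tropEval P n y ≤ P k + ((k * y : ℝ) : WithTop ℝ) :=
  Finset.inf_le (Finset.mem_range_succ_iff.2 hk)

theorem tropEval_zero_add_le {v : ℕ} (hlow : ∀ k < v, P k = ⊤) {y : ℝ} (hy : 0 ≤ y) :
    tropEval P n 0 + ((v * y : ℝ) : WithTop ℝ) ≤ tropEval P n y := by
  refine Finset.le_inf fun k hk => ?_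
  rcases lt_or_ge k v with hkv | hvk
  · simp [hlow k hkv]
  · have h0 := tropEval_le (P := P) (Finset.mem_range_succ_iff.1 hk) 0
    rw [mul_zero, WithTop.coe_zero, add_zero] at h0
    exact add_le_add h0 (WithTop.coe_le_coe.2 (mul_le_mul_of_nonneg_right (Nat.cast_le.2 hvk) hy))

theorem vexFn_eq_legendre {g : ℝ → ℝ} (hg : ∀ y, tropEval P n y = g y) :
    vexFn P n = legendre g := by
  funext z
  apply csSup_eq_csSup_of_forall_exists_le
  · rintro _ ⟨α, β, hαβ, rfl⟩
    refine ⟨g (-α) - z * -α, ⟨-α, rfl⟩, ?_⟩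
    have hβ : (β : WithTop ℝ) ≤ g (-α) := by
      rw [← hg]
      refine Finset.le_inf fun k hk => ?_
      cases hPk : P k with
      | top => simp
      | coe r =>
        rw [← WithTop.coe_add, WithTop.coe_le_coe]
        nlinarith [hαβ k (Finset.mem_range_succ_iff.1 hk) r hPk]
    have := WithTop.coe_le_coe.1 hβ
    linarith
  · rintro _ ⟨y, rfl⟩
    refine ⟨g y - z * y, ⟨-y, g y, fun k hk r hr => ?_, by ring⟩, le_rfl⟩
    have h := tropEval_le (P := P) hk y
    rw [hg, hr, ← WithTop.coe_add, WithTop.coe_le_coe] at h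
    linarith

end TropEval

section NewtonEdge

/-- `[x₀, x₀ + ℓ]` is the edge of slope `-x` of the graph of `G` over `[lo, hi]`
(a vertex when `ℓ = 0`). -/
def IsNewtonEdge (G : ℝ → ℝ) (lo hi x x₀ : ℝ) (ℓ : ℕ) : Prop :=
  lo ≤ x₀ ∧ x₀ + ℓ ≤ hi ∧ (∀ z ∈ Icc x₀ (x₀ + ℓ), G z = G x₀ - x * (z - x₀)) ∧
    ∀ z ∈ Icc lo hi, z < x₀ ∨ x₀ + ℓ < z → G x₀ - x * (z - x₀) < G z

variable {G : ℝ → ℝ} {lo hi x x₀ : ℝ} {ℓ : ℕ}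

theorem IsNewtonEdge.le (h : IsNewtonEdge G lo hi x x₀ ℓ) {z : ℝ} (hz : z ∈ Icc lo hi) :
    G x₀ - x * (z - x₀) ≤ G z := by
  obtain ⟨-, -, haff, hstrict⟩ := h
  by_cases hz' : z ∈ Icc x₀ (x₀ + ℓ)
  · exact (haff z hz').ge
  · rw [mem_Icc, not_and_or, not_le, not_le] at hz'
    exact (hstrict z hz hz').le

theorem IsNewtonEdge.eq_iff (h : IsNewtonEdge G lo hi x x₀ ℓ) {z : ℝ} (hz : z ∈ Icc lo hi) :
    G z = G x₀ - x * (z - x₀) ↔ z ∈ Icc x₀ (x₀ + ℓ) := by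
  refine ⟨fun heq => ?_, h.2.2.1 z⟩
  by_contra hz'
  rw [mem_Icc, not_and_or, not_le, not_le] at hz'
  exact (h.2.2.2 z hz hz').ne' heq

theorem IsNewtonEdge.Icc_subset (h : IsNewtonEdge G lo hi x x₀ ℓ) :
    Icc x₀ (x₀ + ℓ) ⊆ Icc lo hi :=
  Icc_subset_Icc h.1 h.2.1

/-- A supporting line of a given slope is unique, hence so is the edge it cuts out. -/
theorem IsNewtonEdge.unique {x₁ : ℝ} {ℓ₁ : ℕ} (h₀ : IsNewtonEdge G lo hi x x₀ ℓ)
    (h₁ : IsNewtonEdge G lo hi x x₁ ℓ₁) : x₀ = x₁ ∧ ℓ = ℓ₁ := by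
  have hx₀ : x₀ ∈ Icc lo hi := h₀.Icc_subset (left_mem_Icc.2 (by simp))
  have hx₁ : x₁ ∈ Icc lo hi := h₁.Icc_subset (left_mem_Icc.2 (by simp))
  have hline : ∀ z, G x₀ - x * (z - x₀) = G x₁ - x * (z - x₁) := by
    intro z
    linarith [h₀.le hx₁, h₁.le hx₀]
  have hIcc : Icc x₀ (x₀ + ℓ) = Icc x₁ (x₁ + ℓ₁) := by
    ext z
    constructor
    · intro hz
      have hzI := h₀.Icc_subset hz
      rw [← h₁.eq_iff hzI, ← hline]
      exact (h₀.eq_iff hzI).2 hz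
    · intro hz
      have hzI := h₁.Icc_subset hz
      rw [← h₀.eq_iff hzI, hline]
      exact (h₁.eq_iff hzI).2 hz
  obtain ⟨rfl, hend⟩ := (Icc_eq_Icc_iff (by simp)).1 hIcc
  exact ⟨rfl, by exact_mod_cast add_left_cancel hend⟩

end NewtonEdge

theorem Finset.card_filter_le_eq_add {ι α : Type*} [Fintype ι] [LinearOrder α] (c : ι → α) (a : α) :
    #{i | a ≤ c i} = #{i | a < c i} + #{i | c i = a} := by
  rw [← Finset.card_union_of_disjoint (Finset.disjoint_filter.2 fun i _ h h' => h.ne' h'),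
    ← Finset.filter_or]
  congr 1
  ext i
  simp [le_iff_lt_or_eq, eq_comm]

theorem le_of_forall_nonneg_add_mul_le {a b s t : ℝ} (h : ∀ y, 0 ≤ y → a + s * y ≤ b + t * y) :
    s ≤ t := by
  by_contra! hts
  have := h ((|b - a| + 1) / (s - t)) (by positivity)
  have hst : (s - t) * ((|b - a| + 1) / (s - t)) = |b - a| + 1 := by field_simp
  nlinarith [le_abs_self (b - a)]

namespace WithTop

theorem coe_min_untopD_s2 (y : ℝ) (c : WithTop ℝ) :
    ((min y (c.untopD y) : ℝ) : WithTop ℝ) = min (y : WithTop ℝ) c := by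
  induction c with
  | top => simp
  | coe r => rw [untopD_coe, coe_min]

theorem min_untopD_sub_le_of_le {y ys : ℝ} (c : WithTop ℝ) (h : ys ≤ y) :
    min y (c.untopD y) - min ys (c.untopD ys) ≤ if (ys : WithTop ℝ) < c then y - ys else 0 := by
  induction c with
  | top => simp
  | coe r =>
    simp only [untopD_coe, coe_lt_coe]
    split_ifs with hr
    · rw [min_eq_left hr.le]; linarith [min_le_left y r]
    · rw [min_eq_right (not_lt.1 hr), min_eq_right ((not_lt.1 hr).trans h), sub_self]

theorem min_untopD_sub_le_of_ge {y ys : ℝ} (c : WithTop ℝ) (h : y ≤ ys) :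
    min y (c.untopD y) - min ys (c.untopD ys) ≤ if (ys : WithTop ℝ) ≤ c then y - ys else 0 := by
  induction c with
  | top => simp
  | coe r =>
    simp only [untopD_coe, coe_le_coe]
    split_ifs with hr
    · rw [min_eq_left hr, min_eq_left (h.trans hr)]
    · rw [min_eq_right (not_le.1 hr).le]; linarith [min_le_right y r]

theorem min_untopD_sub_eq_of_gt {y ys : ℝ} {c : WithTop ℝ} (h : ys < y)
    (hc : (ys : WithTop ℝ) < c → (y : WithTop ℝ) ≤ c) :
    min y (c.untopD y) - min ys (c.untopD ys) = if (ys : WithTop ℝ) < c then y - ys else 0 := by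
  induction c with
  | top => simp
  | coe r =>
    simp only [untopD_coe, coe_lt_coe, coe_le_coe] at hc ⊢
    split_ifs with hr
    · rw [min_eq_left (hc hr), min_eq_left hr.le]
    · rw [min_eq_right (not_lt.1 hr), min_eq_right ((not_lt.1 hr).trans h.le), sub_self]

theorem min_untopD_sub_eq_of_lt {y ys : ℝ} {c : WithTop ℝ} (h : y < ys)
    (hc : c < (ys : WithTop ℝ) → c ≤ (y : WithTop ℝ)) :
    min y (c.untopD y) - min ys (c.untopD ys) = if (ys : WithTop ℝ) ≤ c then y - ys else 0 := by
  induction c with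
  | top => simp
  | coe r =>
    simp only [untopD_coe, coe_lt_coe, coe_le_coe] at hc ⊢
    split_ifs with hr
    · rw [min_eq_left hr, min_eq_left (h.le.trans hr)]
    · rw [min_eq_right (hc (not_le.1 hr)), min_eq_right (not_le.1 hr).le, sub_self]

theorem eventually_coe_le_of_coe_lt (ys : ℝ) (c : WithTop ℝ) :
    ∀ᶠ y : ℝ in 𝓝 ys, (ys : WithTop ℝ) < c → (y : WithTop ℝ) ≤ c := by
  induction c with
  | top => simp
  | coe r =>
    simp only [coe_lt_coe, coe_le_coe]
    by_cases hr : ys < r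
    · filter_upwards [eventually_le_nhds hr] with y hy using fun _ => hy
    · exact Eventually.of_forall fun y h => absurd h hr

theorem eventually_le_coe_of_lt_coe (ys : ℝ) (c : WithTop ℝ) :
    ∀ᶠ y : ℝ in 𝓝 ys, c < (ys : WithTop ℝ) → c ≤ (y : WithTop ℝ) := by
  induction c with
  | top => simp
  | coe r =>
    simp only [coe_lt_coe, coe_le_coe]
    by_cases hr : r < ys
    · filter_upwards [eventually_ge_nhds hr] with y hy using fun _ => hy
    · exact Eventually.of_forall fun y h => absurd h hr

theorem min_untopD_le_add_ite (y : ℝ) (c : WithTop ℝ) :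
    min y (c.untopD y) ≤ c.untopD 0 + if c = ⊤ then y else 0 := by
  induction c <;> simp

theorem min_untopD_add_ite_le {y : ℝ} (c : WithTop ℝ) (hy : 0 ≤ y) :
    min 0 (c.untopD 0) + (if c = ⊤ then y else 0) ≤ min y (c.untopD y) := by
  induction c with
  | top => simp
  | coe r => simpa using min_le_min_right r hy

end WithTop

section SumMin

variable {ι : Type*} [Fintype ι] (c : ι → WithTop ℝ)

/-- The real number `∑ i, min y (c i)`: a root `c i = ⊤` contributes `untopD y ⊤ = y`. -/
noncomputable def sumMin (y : ℝ) : ℝ := ∑ i, min y ((c i).untopD y)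

theorem coe_sumMin (y : ℝ) : ((sumMin c y : ℝ) : WithTop ℝ) = ∑ i, min (y : WithTop ℝ) (c i) := by
  simp only [sumMin, WithTop.coe_sum, WithTop.coe_min_untopD_s2]

theorem sum_ite_zero_eq_card_mul (p : ι → Prop) [DecidablePred p] (d : ℝ) :
    ∑ i, (if p i then d else 0) = #{i | p i} * d := by
  rw [← Finset.sum_filter, Finset.sum_const, nsmul_eq_mul]

theorem sumMin_sub_le_of_le {y ys : ℝ} (h : ys ≤ y) :
    sumMin c y - sumMin c ys ≤ #{i | (ys : WithTop ℝ) < c i} * (y - ys) := by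
  rw [sumMin, sumMin, ← Finset.sum_sub_distrib, ← sum_ite_zero_eq_card_mul]
  exact Finset.sum_le_sum fun i _ => (c i).min_untopD_sub_le_of_le h

theorem sumMin_sub_le_of_ge {y ys : ℝ} (h : y ≤ ys) :
    sumMin c y - sumMin c ys ≤ #{i | (ys : WithTop ℝ) ≤ c i} * (y - ys) := by
  rw [sumMin, sumMin, ← Finset.sum_sub_distrib, ← sum_ite_zero_eq_card_mul]
  exact Finset.sum_le_sum fun i _ => (c i).min_untopD_sub_le_of_ge h

theorem exists_gt_sumMin_sub_eq (ys : ℝ) :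
    ∃ y > ys, sumMin c y - sumMin c ys = #{i | (ys : WithTop ℝ) < c i} * (y - ys) := by
  have hev : ∀ᶠ y in 𝓝[>] ys, ys < y ∧ ∀ i, (ys : WithTop ℝ) < c i → (y : WithTop ℝ) ≤ c i :=
    eventually_mem_nhdsWithin.and <| nhdsWithin_le_nhds <|
      eventually_all.2 fun i => WithTop.eventually_coe_le_of_coe_lt ys (c i)
  obtain ⟨y, hy, hroots⟩ := hev.exists
  refine ⟨y, hy, ?_⟩
  rw [sumMin, sumMin, ← Finset.sum_sub_distrib, ← sum_ite_zero_eq_card_mul]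
  exact Finset.sum_congr rfl fun i _ => WithTop.min_untopD_sub_eq_of_gt hy (hroots i)

theorem exists_lt_sumMin_sub_eq (ys : ℝ) :
    ∃ y < ys, sumMin c y - sumMin c ys = #{i | (ys : WithTop ℝ) ≤ c i} * (y - ys) := by
  have hev : ∀ᶠ y in 𝓝[<] ys, y < ys ∧ ∀ i, c i < (ys : WithTop ℝ) → c i ≤ (y : WithTop ℝ) :=
    eventually_mem_nhdsWithin.and <| nhdsWithin_le_nhds <|
      eventually_all.2 fun i => WithTop.eventually_le_coe_of_lt_coe ys (c i)
  obtain ⟨y, hy, hroots⟩ := hev.exists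
  refine ⟨y, hy, ?_⟩
  rw [sumMin, sumMin, ← Finset.sum_sub_distrib, ← sum_ite_zero_eq_card_mul]
  exact Finset.sum_congr rfl fun i _ => WithTop.min_untopD_sub_eq_of_lt hy (hroots i)

theorem forall_sumMin_sub_mul_le_iff {s ys : ℝ} :
    (∀ y, sumMin c y - s * y ≤ sumMin c ys - s * ys) ↔
      (#{i | (ys : WithTop ℝ) < c i} : ℝ) ≤ s ∧ s ≤ #{i | (ys : WithTop ℝ) ≤ c i} := by
  constructor
  · intro hmax
    obtain ⟨y₁, hy₁, heq₁⟩ := exists_gt_sumMin_sub_eq c ys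
    obtain ⟨y₂, hy₂, heq₂⟩ := exists_lt_sumMin_sub_eq c ys
    have h₁ := hmax y₁
    have h₂ := hmax y₂
    constructor
    · nlinarith
    · nlinarith
  · rintro ⟨hlt, hle⟩ y
    rcases le_total ys y with h | h
    · nlinarith [sumMin_sub_le_of_le c h]
    · nlinarith [sumMin_sub_le_of_ge c h]

theorem sumMin_le (y : ℝ) : sumMin c y ≤ ∑ i, (c i).untopD 0 + #{i | c i = ⊤} * y := by
  rw [← sum_ite_zero_eq_card_mul, ← Finset.sum_add_distrib]
  exact Finset.sum_le_sum fun i _ => (c i).min_untopD_le_add_ite y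

theorem le_sumMin {y : ℝ} (hy : 0 ≤ y) :
    ∑ i, min 0 ((c i).untopD 0) + #{i | c i = ⊤} * y ≤ sumMin c y := by
  rw [← sum_ite_zero_eq_card_mul, ← Finset.sum_add_distrib]
  exact Finset.sum_le_sum fun i _ => (c i).min_untopD_add_ite_le hy

theorem sumMin_le_card_mul (y : ℝ) : sumMin c y ≤ Fintype.card ι * y := by
  rw [← nsmul_eq_mul, ← Finset.card_univ, ← Finset.sum_const]
  exact Finset.sum_le_sum fun i _ => min_le_left _ _

variable (p : ℝ) {z : ℝ}

theorem bddAbove_range_add_sumMin_sub_mul (hz : z ∈ Icc (#{i | c i = ⊤} : ℝ) (Fintype.card ι)) :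
    BddAbove (Set.range fun y => p + sumMin c y - z * y) := by
  refine ⟨max (p + ∑ i, (c i).untopD 0) p, ?_⟩
  rintro _ ⟨y, rfl⟩
  rcases le_total 0 y with hy | hy
  · nlinarith [sumMin_le c y, le_max_left (p + ∑ i, (c i).untopD 0) p, hz.1]
  · nlinarith [sumMin_le_card_mul c y, le_max_right (p + ∑ i, (c i).untopD 0) p, hz.2]

theorem legendre_add_sumMin_eq_iff (hz : z ∈ Icc (#{i | c i = ⊤} : ℝ) (Fintype.card ι)) {ys : ℝ} :
    legendre (fun y => p + sumMin c y) z = p + sumMin c ys - z * ys ↔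
      (#{i | (ys : WithTop ℝ) < c i} : ℝ) ≤ z ∧ z ≤ #{i | (ys : WithTop ℝ) ≤ c i} := by
  rw [legendre_eq_iff (bddAbove_range_add_sumMin_sub_mul c p hz), ← forall_sumMin_sub_mul_le_iff]
  simp only [add_sub_assoc, add_le_add_iff_left]

theorem isNewtonEdge_legendre_add_sumMin (x : ℝ) :
    IsNewtonEdge (legendre fun y => p + sumMin c y) #{i | c i = ⊤} (Fintype.card ι) x
      #{i | (x : WithTop ℝ) < c i} #{i | c i = (x : WithTop ℝ)} := by
  set G := legendre fun y => p + sumMin c y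
  set a := #{i | (x : WithTop ℝ) < c i}
  set b := #{i | (x : WithTop ℝ) ≤ c i}
  have hb : (b : ℝ) = a + #{i | c i = (x : WithTop ℝ)} := by
    exact_mod_cast Finset.card_filter_le_eq_add c (x : WithTop ℝ)
  have hwa : (#{i | c i = ⊤} : ℝ) ≤ a := by
    refine Nat.cast_le.2 (Finset.card_le_card <| Finset.monotone_filter_right _ fun i _ h => ?_)
    exact h ▸ WithTop.coe_lt_top x
  have hbn : (b : ℝ) ≤ Fintype.card ι := Nat.cast_le.2 (Finset.card_le_univ _)
  have hab : (a : ℝ) ≤ b := by simp [hb]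
  have htangent : ∀ z ∈ Icc (#{i | c i = ⊤} : ℝ) (Fintype.card ι),
      (G z = p + sumMin c x - z * x ↔ z ∈ Icc (a : ℝ) b) :=
    fun z hz => legendre_add_sumMin_eq_iff c p hz
  have hGa : G a = p + sumMin c x - a * x :=
    (htangent a ⟨hwa, hab.trans hbn⟩).2 ⟨le_rfl, hab⟩
  refine ⟨hwa, hb ▸ hbn, fun z hz => ?_, fun z hz hout => ?_⟩
  · rw [← hb] at hz
    rw [(htangent z ⟨hwa.trans hz.1, hz.2.trans hbn⟩).2 hz, hGa]
    ring
  · have hle := sub_mul_le_legendre (bddAbove_range_add_sumMin_sub_mul c p hz) x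
    have hne : p + sumMin c x - z * x ≠ G z := fun heq => by
      have := (htangent z hz).1 heq.symm
      rw [← hb] at hout
      rcases hout with h | h <;> linarith [this.1, this.2]
    have hline : G a - x * (z - a) = p + sumMin c x - z * x := by rw [hGa]; ring
    exact hline ▸ lt_of_le_of_ne hle hne

theorem card_eq_and_pos_iff_exists_isNewtonEdge (x : ℝ) (m : ℕ) :
    (#{i | c i = (x : WithTop ℝ)} = m ∧ 0 < m) ↔
      (0 < m ∧ ∃ x₀ : ℝ, IsNewtonEdge (legendre fun y => p + sumMin c y) #{i | c i = ⊤}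
        (Fintype.card ι) x x₀ m) := by
  constructor
  · rintro ⟨rfl, hm⟩
    exact ⟨hm, _, isNewtonEdge_legendre_add_sumMin c p x⟩
  · rintro ⟨hm, x₀, hedge⟩
    exact ⟨((isNewtonEdge_legendre_add_sumMin c p x).unique hedge).2, hm⟩

theorem card_top_eq_of_tropEval_eq {P : ℕ → WithTop ℝ} {n v : ℕ} (hval : P v ≠ ⊤)
    (hlow : ∀ k < v, P k = ⊤) (hvn : v ≤ n) (hg : ∀ y, tropEval P n y = ↑(p + sumMin c y)) :
    #{i | c i = ⊤} = v := by
  obtain ⟨pv, hpv⟩ := WithTop.ne_top_iff_exists.1 hval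
  have hupper : ∀ y, p + sumMin c y ≤ pv + v * y := fun y => by
    have := tropEval_le (P := P) hvn y
    rwa [hg, ← hpv, ← WithTop.coe_add, WithTop.coe_le_coe] at this
  have hlower : ∀ y, 0 ≤ y → p + sumMin c 0 + v * y ≤ p + sumMin c y := fun y hy => by
    have := tropEval_zero_add_le (n := n) hlow hy
    rwa [hg, hg, ← WithTop.coe_add, WithTop.coe_le_coe] at this
  refine Nat.cast_injective (R := ℝ) (le_antisymm ?_ ?_)
  · refine le_of_forall_nonneg_add_mul_le (a := p + ∑ i, min 0 ((c i).untopD 0)) (b := pv)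
      fun y hy => ?_
    linarith [le_sumMin c hy, hupper y]
  · refine le_of_forall_nonneg_add_mul_le (a := p + sumMin c 0) (b := p + ∑ i, (c i).untopD 0)
      fun y hy => ?_
    linarith [sumMin_le c y, hlower y hy]

end SumMin

theorem stmt_2_general (n v : ℕ) (P : ℕ → WithTop ℝ) (hdeg : P n ≠ ⊤) (hval : P v ≠ ⊤)
    (hlow : ∀ k < v, P k = ⊤) (hvn : v ≤ n)
    (c : Fin n → WithTop ℝ)
    (hfact : ∀ y : ℝ, tropEval P n y = P n + ∑ i : Fin n, min (y : WithTop ℝ) (c i))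
    (x : ℝ) (m : ℕ) :
    ((Finset.univ.filter fun i : Fin n => c i = (x : WithTop ℝ)).card = m ∧ 0 < m) ↔
    (0 < m ∧ ∃ x₀ : ℝ, (v : ℝ) ≤ x₀ ∧ x₀ + (m : ℝ) ≤ (n : ℝ) ∧
      (∀ z ∈ Set.Icc x₀ (x₀ + (m : ℝ)), vexFn P n z = vexFn P n x₀ - x * (z - x₀)) ∧
      (∀ z ∈ Set.Icc (v : ℝ) (n : ℝ), z < x₀ ∨ x₀ + (m : ℝ) < z →
        vexFn P n x₀ - x * (z - x₀) < vexFn P n z)) := by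
  obtain ⟨p, hp⟩ := WithTop.ne_top_iff_exists.1 hdeg
  have hg : ∀ y, tropEval P n y = ↑(p + sumMin c y) := fun y => by
    rw [hfact, WithTop.coe_add, coe_sumMin, hp]
  obtain rfl := card_top_eq_of_tropEval_eq c p hval hlow hvn hg
  rw [vexFn_eq_legendre hg]
  have key := card_eq_and_pos_iff_exists_isNewtonEdge c p x m
  rw [Fintype.card_fin] at key
  exact key

/-- The finite tropical roots of `P` are the opposites of the slopes of the affine
pieces of the Newton polygon of `P`, and the multiplicity of a root is the
horizontal length of the interval on which the convex hull has that slope: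
`x` is a root of multiplicity `m ≥ 1` iff the convex hull `vex P` is affine with
slope `-x` exactly on some interval `[x₀, x₀ + m] ⊆ [val P, deg P]`. -/
theorem stmt_2 (n v : ℕ) (P : ℕ → WithTop ℝ) (hdeg : P n ≠ ⊤) (hval : P v ≠ ⊤)
    (hlow : ∀ k < v, P k = ⊤) (hvn : v ≤ n)
    (c : Fin n → WithTop ℝ) (hc : Monotone c)
    (hfact : ∀ y : ℝ, tropEval P n y = P n + ∑ i : Fin n, min (y : WithTop ℝ) (c i))
    (x : ℝ) (m : ℕ) :
    ((Finset.univ.filter fun i : Fin n => c i = (x : WithTop ℝ)).card = m ∧ 0 < m) ↔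
    (0 < m ∧ ∃ x₀ : ℝ, (v : ℝ) ≤ x₀ ∧ x₀ + (m : ℝ) ≤ (n : ℝ) ∧
      (∀ z ∈ Set.Icc x₀ (x₀ + (m : ℝ)), vexFn P n z = vexFn P n x₀ - x * (z - x₀)) ∧
      (∀ z ∈ Set.Icc (v : ℝ) (n : ℝ), z < x₀ ∨ x₀ + (m : ℝ) < z →
        vexFn P n x₀ - x * (z - x₀) < vexFn P n z)) :=
  stmt_2_general n v P hdeg hval hlow hvn c hfact x m
end

section
/- A formal min-plus polynomial P of degree n satisfies \(P=\overline{P}\) (i.e., its coefficient sequence is convex) if and only if there exist \(c_1\le\cdots\le c_n\in\mathbb{R}\cup\{+\infty\}\) such that \(P=P_n\otimes(Y\oplus c_1)\cdots(Y\oplus c_n)\) as formal polynomials; in that case the \(c_i\) are unique and given by \(c_i=P_{n-i}-P_{n-i+1}\) when \(P_{n-i+1}\ne+\infty\), and \(c_i=+\infty\) otherwise. -/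
/-!
With sorted roots `c₁ ≤ ⋯ ≤ cₙ`, the minimum defining a coefficient of `(Y ⊕ c₁) ⋯ (Y ⊕ cₙ)` is
attained by the smallest roots, so the coefficient of `Y ^ (n - d)` is the partial sum
`c₁ + ⋯ + c_d`. Partial sums of a nondecreasing sequence are convex, and conversely a convex `P`
has nondecreasing successive differences `P (n - i - 1) - P (n - i)`, which therefore serve as
roots. Subtraction in `WithTop ℝ` satisfies `x - ⊤ = ⊤`, which gives the root `⊤` exactly where
`P (n - i) = ⊤`; convexity with `P n ≠ ⊤` propagates `⊤` from `P (m + 1)` down to `P m`, which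
is what makes these roots reproduce `P`. Uniqueness is read off the partial-sum formula.
-/

open scoped Classical

/-- Cauchy (min-plus) product of formal min-plus polynomials:
`(P ⊗ Q)_k = min_{i + j = k} (P_i + Q_j)`. -/
noncomputable def mpMulPoly (P Q : ℕ → WithTop ℝ) : ℕ → WithTop ℝ :=
  fun k => (Finset.range (k + 1)).inf fun i => P i + Q (k - i)

/-- The min-plus constant polynomial `𝟙`. -/
noncomputable def mpOne : ℕ → WithTop ℝ := fun k => if k = 0 then 0 else ⊤

/-- The linear min-plus factor `Y ⊕ c`. -/
noncomputable def linFactor (c : WithTop ℝ) : ℕ → WithTop ℝ :=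
  fun k => if k = 0 then c else if k = 1 then 0 else ⊤

/-- The min-plus product `(Y ⊕ c₁) ⋯ (Y ⊕ cₙ)`. -/
noncomputable def prodLinFactors : List (WithTop ℝ) → (ℕ → WithTop ℝ)
  | [] => mpOne
  | a :: l => mpMulPoly (linFactor a) (prodLinFactors l)

open Finset

lemma mpMulPoly_linFactor_zero (a : WithTop ℝ) (Q : ℕ → WithTop ℝ) :
    mpMulPoly (linFactor a) Q 0 = a + Q 0 := by
  simp [mpMulPoly, linFactor]

lemma mpMulPoly_linFactor_succ (a : WithTop ℝ) (Q : ℕ → WithTop ℝ) (k : ℕ) :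
    mpMulPoly (linFactor a) Q (k + 1) = min (a + Q (k + 1)) (Q k) := by
  rw [mpMulPoly, range_eq_Ico, ← insert_Ico_add_one_left_eq_Ico (by omega), inf_insert,
    ← insert_Ico_add_one_left_eq_Ico (by omega), inf_insert]
  have hrest : (Ico (0 + 1 + 1) (k + 1 + 1)).inf (fun i => linFactor a i + Q (k + 1 - i)) = ⊤ :=
    (Finset.inf_eq_top_iff _ _).2 fun i hi => by
      simp [linFactor, show i ≠ 0 by grind, show i ≠ 1 by grind]
  rw [hrest]
  simp [linFactor]

lemma prodLinFactors_eq_top_of_length_lt :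
    ∀ (l : List (WithTop ℝ)) {k : ℕ}, l.length < k → prodLinFactors l k = ⊤
  | [], k, hk => by simp [prodLinFactors, mpOne, Nat.pos_iff_ne_zero.1 hk]
  | _ :: _, 0, hk => absurd hk (Nat.not_lt_zero _)
  | a :: l, k + 1, hk => by
    have hk : l.length < k := by simpa using hk
    rw [prodLinFactors, mpMulPoly_linFactor_succ, prodLinFactors_eq_top_of_length_lt l hk,
      prodLinFactors_eq_top_of_length_lt l (hk.trans (Nat.lt_succ_self k))]
    simp

lemma prodLinFactors_length_sub :
    ∀ {l : List (WithTop ℝ)}, l.Pairwise (· ≤ ·) → ∀ {d : ℕ}, d ≤ l.length →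
      prodLinFactors l (l.length - d) = (l.take d).sum
  | [], _, d, hd => by simp_all [prodLinFactors, mpOne]
  | a :: l, hl, 0, _ => by
    have h := prodLinFactors_length_sub hl.of_cons (Nat.zero_le l.length)
    rw [List.length_cons, Nat.sub_zero, prodLinFactors, mpMulPoly_linFactor_succ,
      prodLinFactors_eq_top_of_length_lt l (Nat.lt_succ_self _)]
    simp_all
  | a :: l, hl, d + 1, hd => by
    rw [List.pairwise_cons] at hl
    have hd : d ≤ l.length := by simpa using hd
    have ih := fun {e} (he : e ≤ l.length) => prodLinFactors_length_sub hl.2 he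
    rw [List.length_cons, Nat.add_sub_add_right, List.take_succ_cons, List.sum_cons]
    obtain hd | rfl := hd.lt_or_eq
    · rw [← Nat.sub_add_cancel (Nat.sub_pos_of_lt hd), prodLinFactors, mpMulPoly_linFactor_succ,
        Nat.sub_add_cancel (Nat.sub_pos_of_lt hd), ih hd.le, Nat.sub_sub, ih hd,
        List.sum_take_succ _ _ (by omega), add_comm _ l[d]]
      exact min_eq_left (add_le_add_left (hl.1 _ (List.getElem_mem _)) _)
    · rw [Nat.sub_self, prodLinFactors, mpMulPoly_linFactor_zero, ← Nat.sub_self l.length,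
        ih le_rfl]

def extendTop {α : Type*} [Top α] {n : ℕ} (c : Fin n → α) (i : ℕ) : α :=
  if h : i < n then c ⟨i, h⟩ else ⊤

lemma extendTop_of_lt {α : Type*} [Top α] {n : ℕ} (c : Fin n → α) {i : ℕ} (h : i < n) :
    extendTop c i = c ⟨i, h⟩ := dif_pos h

lemma Monotone.extendTop {α : Type*} [Preorder α] [OrderTop α] {n : ℕ} {c : Fin n → α}
    (hc : Monotone c) : Monotone (extendTop c) := by
  intro i j hij
  by_cases hj : j < n
  · rw [extendTop_of_lt c hj, extendTop_of_lt c (hij.trans_lt hj)]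
    exact hc (Fin.mk_le_mk.2 hij)
  · simp [_root_.extendTop, hj]

lemma sum_take_ofFn_eq_sum_range_extendTop {M : Type*} [AddCommMonoid M] [Top M] {n : ℕ}
    (c : Fin n → M) :
    ∀ {d : ℕ}, d ≤ n → ((List.ofFn c).take d).sum = ∑ i ∈ range d, extendTop c i
  | 0, _ => by simp
  | d + 1, hd => by
    rw [List.sum_take_succ _ _ (by simpa using hd),
      sum_take_ofFn_eq_sum_range_extendTop c (Nat.le_of_succ_le hd), sum_range_succ,
      List.getElem_ofFn, extendTop_of_lt c hd]

lemma prodLinFactors_ofFn_sub {n : ℕ} {c : Fin n → WithTop ℝ} (hc : Monotone c) {d : ℕ}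
    (hd : d ≤ n) : prodLinFactors (List.ofFn c) (n - d) = ∑ i ∈ range d, extendTop c i := by
  have hsorted := List.sortedLE_iff_pairwise.1 (List.sortedLE_ofFn_iff.2 hc)
  rw [← sum_take_ofFn_eq_sum_range_extendTop c hd,
    ← prodLinFactors_length_sub hsorted (by simpa using hd), List.length_ofFn]

lemma prodLinFactors_ofFn_eq_top_of_lt {n : ℕ} (c : Fin n → WithTop ℝ) {k : ℕ} (hk : n < k) :
    prodLinFactors (List.ofFn c) k = ⊤ :=
  prodLinFactors_eq_top_of_length_lt _ (by simpa using hk)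

lemma eq_add_prodLinFactors_ofFn_iff {n : ℕ} {P : ℕ → WithTop ℝ} {c : Fin n → WithTop ℝ}
    (hc : Monotone c) (hhigh : ∀ k, n < k → P k = ⊤) :
    (∀ k, P k = P n + prodLinFactors (List.ofFn c) k) ↔
      ∀ d ≤ n, P (n - d) = P n + ∑ i ∈ range d, extendTop c i := by
  refine ⟨fun hP d hd => prodLinFactors_ofFn_sub hc hd ▸ hP (n - d), fun hP k => ?_⟩
  rcases le_or_gt k n with hk | hk
  · rw [← Nat.sub_sub_self hk, hP _ (Nat.sub_le n k), prodLinFactors_ofFn_sub hc (Nat.sub_le n k)]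
  · rw [hhigh k hk, prodLinFactors_ofFn_eq_top_of_lt c hk, add_top]

-- Convexity of `P` on `{0, …, n}` in chord form, cleared of division so that `⊤` values make sense.
def ChordConvex {M : Type*} [AddCommMonoid M] [LE M] (n : ℕ) (P : ℕ → M) : Prop :=
  ∀ i j k : ℕ, i ≤ j → j ≤ k → k ≤ n → (k - i) • P j ≤ (k - j) • P i + (j - i) • P k

lemma chordConvex_sum_range {M : Type*} [AddCommMonoid M] [PartialOrder M] [IsOrderedAddMonoid M]
    {f : ℕ → M} (hf : Monotone f) (n : ℕ) : ChordConvex n fun d => ∑ i ∈ range d, f i := by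
  intro a b d hab hbd _
  dsimp only
  rw [← sum_range_add_sum_Ico f hab, ← sum_range_add_sum_Ico f (hab.trans hbd),
    ← sum_Ico_consecutive f hab hbd]
  set S := ∑ i ∈ range a, f i
  set U := ∑ i ∈ Ico a b, f i
  set T := ∑ i ∈ Ico b d, f i
  have hU : U ≤ (b - a) • f b := by
    simpa using sum_le_card_nsmul (Ico a b) f (f b) fun i hi => hf (mem_Ico.1 hi).2.le
  have hT : (d - b) • f b ≤ T := by
    simpa using card_nsmul_le_sum (Ico b d) f (f b) fun i hi => hf (mem_Ico.1 hi).1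
  have key : (d - b) • U ≤ (b - a) • T :=
    calc (d - b) • U ≤ (d - b) • (b - a) • f b := nsmul_le_nsmul_right hU _
      _ = (b - a) • (d - b) • f b := by rw [smul_comm]
      _ ≤ (b - a) • T := nsmul_le_nsmul_right hT _
  rw [show d - a = (d - b) + (b - a) by omega]
  calc ((d - b) + (b - a)) • (S + U)
      = (d - b) • S + (b - a) • (S + U) + (d - b) • U := by
        simp only [add_nsmul, nsmul_add]; abel
    _ ≤ (d - b) • S + (b - a) • (S + U) + (b - a) • T :=
        add_le_add_right key _
    _ = (d - b) • S + (b - a) • (S + (U + T)) := by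
        simp only [nsmul_add]; abel

lemma chordConvex_of_eq_add_sum_range {M : Type*} [AddCommMonoid M] [PartialOrder M]
    [IsOrderedAddMonoid M] {n : ℕ} {P f : ℕ → M} (hf : Monotone f) (a : M)
    (hP : ∀ d ≤ n, P (n - d) = a + ∑ i ∈ range d, f i) : ChordConvex n P := by
  intro i j k hij hjk hkn
  have hP' : ∀ m ≤ n, P m = a + ∑ i ∈ range (n - m), f i := fun m hm => by
    rw [← hP _ (Nat.sub_le n m), Nat.sub_sub_self hm]
  have h := chordConvex_sum_range hf n (n - k) (n - j) (n - i) (by omega) (by omega) (by omega)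
  rw [show n - i - (n - k) = (k - j) + (j - i) by omega, show n - i - (n - j) = j - i by omega,
    show n - j - (n - k) = k - j by omega] at h
  rw [hP' i (by omega), hP' j (by omega), hP' k hkn, show k - i = (k - j) + (j - i) by omega]
  calc ((k - j) + (j - i)) • (a + ∑ i ∈ range (n - j), f i)
      = (k - j) • a + (j - i) • a + ((k - j) + (j - i)) • ∑ i ∈ range (n - j), f i := by
        rw [nsmul_add, add_nsmul]
    _ ≤ (k - j) • a + (j - i) • a +
        ((j - i) • ∑ i ∈ range (n - k), f i + (k - j) • ∑ i ∈ range (n - i), f i) :=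
        add_le_add_right h _
    _ = (k - j) • (a + ∑ i ∈ range (n - i), f i) + (j - i) • (a + ∑ i ∈ range (n - k), f i) := by
        simp only [nsmul_add]; abel

lemma WithTop.eq_top_of_nsmul_eq_top {α : Type*} [AddMonoid α] {k : ℕ} {x : WithTop α}
    (h : k • x = ⊤) : x = ⊤ := by
  induction x using WithTop.recTopCoe with
  | top => rfl
  | coe r => exact absurd h (WithTop.coe_nsmul r k ▸ WithTop.coe_ne_top)

lemma WithTop.nsmul_top {α : Type*} [AddMonoid α] {k : ℕ} (hk : k ≠ 0) :
    k • (⊤ : WithTop α) = ⊤ := by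
  obtain ⟨m, rfl⟩ := Nat.exists_eq_succ_of_ne_zero hk
  rw [succ_nsmul, WithTop.add_top]

namespace ChordConvex

variable {n : ℕ} {P : ℕ → WithTop ℝ}

lemma eq_top_of_succ_eq_top (h : ChordConvex n P) (hn : P n ≠ ⊤) {m : ℕ} (hm : m < n)
    (htop : P (m + 1) = ⊤) : P m = ⊤ := by
  have h := h m (m + 1) n (Nat.le_succ m) hm le_rfl
  rw [htop, WithTop.nsmul_top (by omega), top_le_iff, WithTop.add_eq_top,
    Nat.add_sub_cancel_left, one_nsmul] at h
  exact WithTop.eq_top_of_nsmul_eq_top (h.resolve_right hn)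

lemma succ_sub_le_sub_succ (h : ChordConvex n P) (hn : P n ≠ ⊤) {m : ℕ} (hm : m + 2 ≤ n) :
    P (m + 1) - P (m + 2) ≤ P m - P (m + 1) := by
  rcases eq_or_ne (P (m + 1)) ⊤ with h1 | h1
  · simp [h1]
  have h2 : P (m + 2) ≠ ⊤ := fun h2 => h1 (h.eq_top_of_succ_eq_top hn (by omega) h2)
  rcases eq_or_ne (P m) ⊤ with h0 | h0
  · simp [h0]
  have hconv := h m (m + 1) (m + 2) (by omega) (by omega) hm
  rw [show m + 2 - m = 2 by omega, show m + 2 - (m + 1) = 1 by omega,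
    show m + 1 - m = 1 by omega, two_nsmul, one_nsmul, one_nsmul] at hconv
  obtain ⟨p0, hp0⟩ := WithTop.ne_top_iff_exists.1 h0
  obtain ⟨p1, hp1⟩ := WithTop.ne_top_iff_exists.1 h1
  obtain ⟨p2, hp2⟩ := WithTop.ne_top_iff_exists.1 h2
  rw [← hp0, ← hp1, ← hp2] at hconv ⊢
  norm_cast at hconv ⊢
  linarith

lemma add_sub_cancel_succ (h : ChordConvex n P) (hn : P n ≠ ⊤) {m : ℕ} (hm : m < n) :
    P (m + 1) + (P m - P (m + 1)) = P m := by
  rcases eq_or_ne (P (m + 1)) ⊤ with h1 | h1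
  · rw [h1, top_add, h.eq_top_of_succ_eq_top hn hm h1]
  · rw [sub_eq_add_neg, add_comm (P m),
      LinearOrderedAddCommGroupWithTop.add_neg_cancel_left_of_ne_top h1]

lemma monotone_sub (h : ChordConvex n P) (hn : P n ≠ ⊤) :
    Monotone fun i : Fin n => P (n - i - 1) - P (n - i) := by
  cases n with
  | zero => exact fun i => i.elim0
  | succ n =>
    refine Fin.monotone_iff_le_succ.2 fun i => ?_
    obtain ⟨m, hm⟩ : ∃ m, n = m + i + 1 := ⟨n - i - 1, by omega⟩
    simp only [Fin.val_castSucc, Fin.val_succ]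
    rw [show n + 1 - i - 1 = m + 1 by omega, show n + 1 - i = m + 2 by omega,
      show n + 1 - (i + 1) - 1 = m by omega, show n + 1 - (i + 1) = m + 1 by omega]
    exact h.succ_sub_le_sub_succ hn (by omega)

lemma eq_add_sum_range_sub (h : ChordConvex n P) (hn : P n ≠ ⊤) {d : ℕ} (hd : d ≤ n) :
    P (n - d) = P n + ∑ i ∈ range d, extendTop (fun i : Fin n => P (n - i - 1) - P (n - i)) i := by
  induction d with
  | zero => simp
  | succ d ih =>
    rw [sum_range_succ, ← add_assoc, ← ih (by omega), extendTop_of_lt _ hd]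
    have hstep := h.add_sub_cancel_succ hn (m := n - d - 1) (by omega)
    rw [show n - d - 1 + 1 = n - d by omega] at hstep
    exact hstep.symm

end ChordConvex

lemma add_eq_of_eq_add_sum_range {M : Type*} [AddCommMonoid M] [Top M] {n : ℕ} {P : ℕ → M}
    {c : Fin n → M} {a : M} (hP : ∀ d ≤ n, P (n - d) = a + ∑ i ∈ range d, extendTop c i)
    (i : Fin n) : c i + P (n - i) = P (n - i - 1) := by
  rw [hP i i.isLt.le, Nat.sub_sub, hP (i + 1) i.isLt, sum_range_succ, extendTop_of_lt c i.isLt]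
  abel

lemma eq_top_of_eq_add_sum_range {n : ℕ} {P : ℕ → WithTop ℝ} {c : Fin n → WithTop ℝ}
    (hc : Monotone c) (hn : P n ≠ ⊤)
    (hP : ∀ d ≤ n, P (n - d) = P n + ∑ i ∈ range d, extendTop c i) (i : Fin n)
    (htop : P (n - i) = ⊤) : c i = ⊤ := by
  rw [hP i i.isLt.le, WithTop.add_eq_top, or_iff_right hn, WithTop.sum_eq_top] at htop
  obtain ⟨j, hj, hjtop⟩ := htop
  rw [mem_range] at hj
  rw [extendTop_of_lt c (hj.trans i.isLt)] at hjtop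
  exact top_le_iff.1 (hjtop ▸ hc (Fin.mk_le_mk.2 hj.le))

/-- A formal min-plus polynomial `P` of degree `n` has a convex coefficient
sequence iff it factors as `P = P_n ⊗ (Y ⊕ c₁) ⋯ (Y ⊕ cₙ)` with
`c₁ ≤ ⋯ ≤ cₙ`; in that case the `cᵢ` are unique and given by
`cᵢ = P_{n-i} - P_{n-i+1}` when `P_{n-i+1} ≠ +∞` and `cᵢ = +∞` otherwise. -/
theorem stmt_3 (n : ℕ) (P : ℕ → WithTop ℝ) (hdeg : P n ≠ ⊤)
    (hhigh : ∀ k, n < k → P k = ⊤) :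
    ((∀ i j k : ℕ, i ≤ j → j ≤ k → k ≤ n →
        (k - i) • P j ≤ (k - j) • P i + (j - i) • P k) ↔
      ∃ c : Fin n → WithTop ℝ, Monotone c ∧
        ∀ k, P k = P n + prodLinFactors (List.ofFn c) k) ∧
    (∀ c : Fin n → WithTop ℝ, Monotone c →
      (∀ k, P k = P n + prodLinFactors (List.ofFn c) k) →
      ∀ i : Fin n,
        (P (n - i.val) ≠ ⊤ → c i + P (n - i.val) = P (n - i.val - 1)) ∧
        (P (n - i.val) = ⊤ → c i = ⊤)) := by
  refine ⟨⟨fun hconv => ?_, fun ⟨c, hc, hP⟩ => ?_⟩, fun c hc hP i => ?_⟩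
  · have hmono := ChordConvex.monotone_sub hconv hdeg
    exact ⟨_, hmono, (eq_add_prodLinFactors_ofFn_iff hmono hhigh).2 fun d hd =>
      ChordConvex.eq_add_sum_range_sub hconv hdeg hd⟩
  · exact chordConvex_of_eq_add_sum_range hc.extendTop _
      ((eq_add_prodLinFactors_ofFn_iff hc hhigh).1 hP)
  · have hsum := (eq_add_prodLinFactors_ofFn_iff hc hhigh).1 hP
    exact ⟨fun _ => add_eq_of_eq_add_sum_range hsum i, eq_top_of_eq_add_sum_range hc hdeg hsum i⟩
end

section
/- Let P and Q be formal min-plus polynomials of degree n with \(P\ge Q\) coefficientwise and \(P_n=Q_n\ne+\infty\). Then the sequence of tropical roots of P is weakly super-majorized by that of Q: for all \(k=1,\ldots,n\), the sum of the k smallest roots of P is greater than or equal to the sum of the k smallest roots of Q (with the convention that sums involving \(+\infty\) equal \(+\infty\)). -/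
open scoped Classical

/-!
Write `F_c(y) = ∑ᵢ min(y, cᵢ)`. Since the leading coefficients agree and are finite, `P ≥ Q`
gives `F_{cQ} ≤ F_{cP}` pointwise. For any `c` and real `z`, `F_c(z)` is at most the sum of the
first `k` entries plus `(n - k) z`, with equality when `c` is sorted and `z` lies below its last
`n - k` entries. Comparing at `z = min(y, cQ_k)` and cancelling `(n - k) z` bounds
`∑_{i<k} min(y, cQ_i)` by the `k`-th partial sum of `cP` for every real `y`; letting `y → ∞`
gives the claim, an infinite root of `Q` making the left side grow without bound.
-/

open Finset

lemma tropEval_mono {P Q : ℕ → WithTop ℝ} (hPQ : ∀ k, Q k ≤ P k) (n : ℕ) (y : ℝ) :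
    tropEval Q n y ≤ tropEval P n y :=
  inf_mono_fun fun k _ => add_le_add_left (hPQ k) _

lemma sum_le_of_forall_sum_min_coe_le {ι : Type*} (s : Finset ι) (c : ι → WithTop ℝ)
    (B : WithTop ℝ) (h : ∀ y : ℝ, ∑ i ∈ s, min (y : WithTop ℝ) (c i) ≤ B) :
    ∑ i ∈ s, c i ≤ B := by
  by_cases htop : ∃ i ∈ s, c i = ⊤
  · obtain ⟨i₀, hi₀, hc⟩ := htop
    cases B with
    | top => exact le_top
    | coe b =>
      obtain ⟨ℓ, hℓ⟩ : ∃ ℓ : ℝ, (ℓ : WithTop ℝ) = ∑ i ∈ s.erase i₀, min 0 (c i) :=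
        WithTop.ne_top_iff_exists.mp <|
          ((sum_nonpos fun i _ => min_le_left _ _).trans_lt (WithTop.coe_lt_top 0)).ne
      have hgrow : ∀ y : ℝ, 0 ≤ y →
          ((y + ℓ : ℝ) : WithTop ℝ) ≤ ∑ i ∈ s, min (y : WithTop ℝ) (c i) := by
        intro y hy
        rw [← add_sum_erase s _ hi₀, hc, min_top_right, WithTop.coe_add, hℓ]
        gcongr
        exact WithTop.coe_le_coe.mpr hy
      have hb := WithTop.coe_le_coe.mp ((hgrow _ (le_max_left 0 (b - ℓ + 1))).trans (h _))
      linarith [le_max_right 0 (b - ℓ + 1)]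
  · push Not at htop
    obtain ⟨M, hM⟩ := (s.image fun i => (c i).untopD 0).exists_le
    have hle : ∀ i ∈ s, c i ≤ M := by
      intro i hi
      obtain ⟨r, hr⟩ := WithTop.ne_top_iff_exists.mp (htop i hi)
      simpa [← hr] using hM _ (mem_image_of_mem _ hi)
    calc ∑ i ∈ s, c i = ∑ i ∈ s, min (M : WithTop ℝ) (c i) :=
          sum_congr rfl fun i hi => (min_eq_right (hle i hi)).symm
      _ ≤ B := h M

section Truncation

variable {ι : Type*} {c d : ι → WithTop ℝ}

lemma sum_filter_min_coe_le_sum_filter {s : Finset ι}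
    (h : ∀ y : ℝ, ∑ i ∈ s, min (y : WithTop ℝ) (d i) ≤ ∑ i ∈ s, min (y : WithTop ℝ) (c i))
    (p : ι → Prop) [DecidablePred p] {z : ℝ} (hz : ∀ i ∈ s, ¬ p i → (z : WithTop ℝ) ≤ d i) :
    ∑ i ∈ s with p i, min (z : WithTop ℝ) (d i) ≤ ∑ i ∈ s with p i, c i := by
  set m := #{i ∈ s | ¬ p i}
  have hd : ∑ i ∈ s, min (z : WithTop ℝ) (d i) =
      ∑ i ∈ s with p i, min (z : WithTop ℝ) (d i) + m • (z : WithTop ℝ) := by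
    rw [← sum_filter_add_sum_filter_not s p, ← sum_const]
    congr 1
    refine sum_congr rfl fun i hi => min_eq_left ?_
    rw [mem_filter] at hi
    exact hz i hi.1 hi.2
  have hc : ∑ i ∈ s, min (z : WithTop ℝ) (c i) ≤
      ∑ i ∈ s with p i, c i + m • (z : WithTop ℝ) := by
    rw [← sum_filter_add_sum_filter_not s p, ← sum_const]
    gcongr
    · exact min_le_right _ _
    · exact min_le_left _ _
  have hzm : m • (z : WithTop ℝ) ≠ ⊤ := by
    rw [← WithTop.coe_nsmul]
    exact WithTop.coe_ne_top
  exact (WithTop.add_le_add_iff_right hzm).mp (hd ▸ (h z).trans hc)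

variable [Fintype ι]

lemma sum_le_sum_of_forall_sum_min_coe_le
    (h : ∀ y : ℝ, ∑ i, min (y : WithTop ℝ) (d i) ≤ ∑ i, min (y : WithTop ℝ) (c i)) :
    ∑ i, d i ≤ ∑ i, c i :=
  sum_le_of_forall_sum_min_coe_le _ _ _ fun y =>
    (h y).trans (sum_le_sum fun _ _ => min_le_right _ _)

lemma sum_lt_le_sum_lt_of_forall_sum_min_coe_le [LinearOrder ι]
    (h : ∀ y : ℝ, ∑ i, min (y : WithTop ℝ) (d i) ≤ ∑ i, min (y : WithTop ℝ) (c i))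
    (hd : Monotone d) (j : ι) :
    ∑ i with i < j, d i ≤ ∑ i with i < j, c i := by
  refine sum_le_of_forall_sum_min_coe_le _ _ _ fun y => ?_
  obtain ⟨z, hz⟩ := WithTop.ne_top_iff_exists.mp (min_lt_of_left_lt (WithTop.coe_lt_top y)).ne
  have hlt : ∀ i, i < j → min (y : WithTop ℝ) (d i) = min (z : WithTop ℝ) (d i) := by
    intro i hi
    rw [hz, min_assoc, min_eq_right (hd hi.le)]
  rw [sum_congr rfl fun i hi => hlt i (mem_filter.mp hi).2]
  refine sum_filter_min_coe_le_sum_filter h _ fun i _ hi => ?_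
  rw [hz]
  exact (min_le_right _ _).trans (hd (not_lt.mp hi))

end Truncation

theorem stmt_6_general (n : ℕ) (P Q : ℕ → WithTop ℝ)
    (hlead : P n = Q n) (hne : Q n ≠ ⊤)
    (hPQ : ∀ k, Q k ≤ P k)
    (cP cQ : Fin n → WithTop ℝ) (hcQ : Monotone cQ)
    (hfactP : ∀ y : ℝ, tropEval P n y = P n + ∑ i : Fin n, min (y : WithTop ℝ) (cP i))
    (hfactQ : ∀ y : ℝ, tropEval Q n y = Q n + ∑ i : Fin n, min (y : WithTop ℝ) (cQ i)) :
    ∀ k : ℕ, k ≤ n →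
      ∑ i ∈ Finset.univ.filter (fun i : Fin n => i.val < k), cQ i ≤
      ∑ i ∈ Finset.univ.filter (fun i : Fin n => i.val < k), cP i := by
  have hcmp : ∀ y : ℝ, ∑ i, min (y : WithTop ℝ) (cQ i) ≤ ∑ i, min (y : WithTop ℝ) (cP i) := by
    intro y
    have h := tropEval_mono hPQ n y
    rw [hfactQ, hfactP, hlead] at h
    exact (WithTop.add_le_add_iff_left hne).mp h
  intro k hk
  rcases hk.lt_or_eq with hk | rfl
  · exact sum_lt_le_sum_lt_of_forall_sum_min_coe_le hcmp hcQ ⟨k, hk⟩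
  · simpa only [Fin.is_lt, Finset.filter_true] using sum_le_sum_of_forall_sum_min_coe_le hcmp

/-- Monotonicity of tropical roots: if `P ≥ Q` coefficientwise and
`P_n = Q_n ≠ +∞`, then the (increasingly sorted) roots of `P` are weakly
super-majorized by those of `Q`: every partial sum of the `k` smallest roots of
`P` dominates the corresponding partial sum for `Q`. -/
theorem stmt_6 (n : ℕ) (P Q : ℕ → WithTop ℝ)
    (hlead : P n = Q n) (hne : Q n ≠ ⊤)
    (hPQ : ∀ k, Q k ≤ P k)
    (cP cQ : Fin n → WithTop ℝ) (hcP : Monotone cP) (hcQ : Monotone cQ)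
    (hfactP : ∀ y : ℝ, tropEval P n y = P n + ∑ i : Fin n, min (y : WithTop ℝ) (cP i))
    (hfactQ : ∀ y : ℝ, tropEval Q n y = Q n + ∑ i : Fin n, min (y : WithTop ℝ) (cQ i)) :
    ∀ k : ℕ, k ≤ n →
      ∑ i ∈ Finset.univ.filter (fun i : Fin n => i.val < k), cQ i ≤
      ∑ i ∈ Finset.univ.filter (fun i : Fin n => i.val < k), cP i :=
  stmt_6_general n P Q hlead hne hPQ cP cQ hcQ hfactP hfactQ
end

section
/- Let K be an algebraically closed field with a non-archimedean valuation \(\nu\), and let \(\mathcal A\in K^{n\times n}\). Then the sequence of valuations of the eigenvalues of \(\mathcal A\) (counted with multiplicities) is weakly super-majorized by the sequence of tropical eigenvalues of the matrix \(A=(\nu(\mathcal A_{ij}))\in(\mathbb{R}\cup\{+\infty\})^{n\times n}\): for each k, the sum of the k smallest valuations of eigenvalues is at least the sum of the k smallest tropical eigenvalues of A. -/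
open scoped Classical

/-- The min-plus `k`-th trace of a matrix:
`tr^min_k(A) = min_{|J| = k} min_{σ ∈ S_J} ∑_{j ∈ J} A_{j σ(j)}`. -/
noncomputable def minplusTrace (n : ℕ) (A : Matrix (Fin n) (Fin n) (WithTop ℝ)) (k : ℕ) :
    WithTop ℝ :=
  (((Finset.univ : Finset (Fin n)).powersetCard k) ×ˢ
      (Finset.univ : Finset (Equiv.Perm (Fin n)))).inf
    fun p => if ∀ i, i ∉ p.1 → p.2 i = i then ∑ i ∈ p.1, A i (p.2 i) else ⊤

/-- The coefficients of the min-plus characteristic polynomial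
`per(Y I ⊕ A)`: its `k`-th coefficient is the min-plus `(n-k)`-th trace. -/
noncomputable def minplusCharCoeff (n : ℕ) (A : Matrix (Fin n) (Fin n) (WithTop ℝ)) :
    ℕ → WithTop ℝ :=
  fun k => minplusTrace n A (n - k)

/-!
Fix a real `y` and let `m` be the number of eigenvalues of valuation `< y`. Evaluating the factored
tropical characteristic polynomial at `y` and keeping only its term of degree `n - m` gives
`∑ᵢ min (y, cᵢ) ≤ tr_m(A) + (n - m) y`. Expanding `det (X - 𝒜)` over permutations shows that every
coefficient of the characteristic polynomial has valuation at least the corresponding tropical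
coefficient. By Vieta, the coefficient of degree `n - m` is `± e_m` of the eigenvalues, and the
product of the `m` eigenvalues of valuation `< y` strictly dominates every other `m`-fold product,
so its valuation is exactly their sum. Together, `∑ᵢ min (y, cᵢ) ≤ ∑ᵢ min (y, μᵢ)` for every `y`.
Taking `y = c_{k-1}` turns this into the `k`-th majorization inequality; if `c_{k-1} = ⊤` the left
side grows faster in `y` than the right, so the right side must be infinite.
-/

open Finset Polynomial

namespace AddValuation

variable {R Γ₀ : Type*} [CommRing R] [LinearOrderedAddCommMonoidWithTop Γ₀] (v : AddValuation R Γ₀)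

theorem map_prod {ι : Type*} (s : Finset ι) (f : ι → R) : v (∏ i ∈ s, f i) = ∑ i ∈ s, v (f i) := by
  induction s using cons_induction with
  | empty => simp
  | cons a s ha ih => rw [prod_cons, sum_cons, map_mul, ih]

theorem map_intCast_unit (u : ℤˣ) : v ((u : ℤ) : R) = 0 := by
  rcases Int.units_eq_one_or u with rfl | rfl <;> simp

theorem map_sum_eq_of_lt {ι : Type*} [DecidableEq ι] {s : Finset ι} {f : ι → R} {j : ι}
    (hj : j ∈ s) (hf : ∀ i ∈ s.erase j, v (f j) < v (f i)) : v (∑ i ∈ s, f i) = v (f j) := by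
  rw [← add_sum_erase s f hj]
  rcases (s.erase j).eq_empty_or_nonempty with h | h
  · rw [h, sum_empty, add_zero]
  · exact map_add_eq_of_lt_left v (map_lt_sum' v ((hf _ h.choose_spec).trans_le le_top) hf)

end AddValuation

namespace Matrix

variable {R ι : Type*} [CommRing R] [Fintype ι] [DecidableEq ι]

theorem prod_charmatrix_apply_perm (A : Matrix ι ι R) (σ : Equiv.Perm ι) :
    ∏ i, A.charmatrix i (σ i) = ∑ J ∈ univ.powerset,
      if ∀ i, i ∉ J → σ i = i then C (∏ i ∈ J, -A i (σ i)) * X ^ (Fintype.card ι - #J)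
      else 0 := by
  have hentry : ∀ i, A.charmatrix i (σ i) = C (-A i (σ i)) + if σ i = i then X else 0 := by
    intro i
    rw [charmatrix_apply, diagonal_apply, map_neg, neg_add_eq_sub, eq_comm]
    simp only [eq_comm (a := σ i)]
  simp_rw [hentry, prod_add, prod_ite_zero, ← map_prod, prod_const, ← card_compl,
    compl_eq_univ_sdiff]
  refine sum_congr rfl fun J _ => ?_
  simp only [mem_sdiff, mem_univ, true_and, mul_ite, mul_zero]

theorem charpoly_coeff_eq_sum_perm {A : Matrix ι ι R} {j : ℕ} (hj : j ≤ Fintype.card ι) :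
    A.charpoly.coeff j =
      ∑ p ∈ univ.powersetCard (Fintype.card ι - j) ×ˢ (univ : Finset (Equiv.Perm ι)),
      if ∀ i, i ∉ p.1 → p.2 i = i then (Equiv.Perm.sign p.2 : R) * ∏ i ∈ p.1, -A i (p.2 i)
      else 0 := by
  rw [charpoly, ← det_transpose, det_apply', finsetSum_coeff, sum_product_right]
  refine sum_congr rfl fun σ _ => ?_
  simp only [transpose_apply, coeff_intCast_mul, prod_charmatrix_apply_perm, finsetSum_coeff]
  rw [mul_sum, powersetCard_eq_filter, sum_filter]
  refine sum_congr rfl fun J _ => ?_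
  have hJ : #J ≤ Fintype.card ι := card_le_univ J
  have : j = Fintype.card ι - #J ↔ #J = Fintype.card ι - j := by omega
  rw [apply_ite (coeff · j), coeff_zero, coeff_C_mul_X_pow]
  split_ifs <;> first | rfl | omega | exact mul_zero _

end Matrix

theorem minplusCharCoeff_le_map_coeff_charpoly {R : Type*} [CommRing R]
    (v : AddValuation R (WithTop ℝ)) {n : ℕ} (A : Matrix (Fin n) (Fin n) R) {j : ℕ} (hj : j ≤ n) :
    minplusCharCoeff n (fun i k => v (A i k)) j ≤ v (A.charpoly.coeff j) := by
  rw [Matrix.charpoly_coeff_eq_sum_perm (by simpa using hj)]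
  refine v.map_le_sum fun p hp => (inf_le (by simpa using hp)).trans ?_
  split_ifs
  · simp [v.map_prod, v.map_intCast_unit]
  · simp

namespace WithTop

variable {ι α : Type*} [AddCommMonoid α] [PartialOrder α] [IsOrderedCancelAddMonoid α]

theorem sum_lt_sum_of_nonempty {s : Finset ι} (hs : s.Nonempty) {f g : ι → WithTop α}
    (hfg : ∀ i ∈ s, f i < g i) : ∑ i ∈ s, f i < ∑ i ∈ s, g i := by
  induction hs using Nonempty.cons_induction with
  | singleton a => simpa using hfg a
  | cons a s ha _ ih =>
    simp only [sum_cons, forall_mem_cons] at hfg ⊢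
    exact WithTop.add_lt_add hfg.1 (ih hfg.2)

theorem sum_lt_sum_of_card_eq {s t : Finset ι} {f : ι → WithTop α} {y : WithTop α}
    (hs : ∀ i ∈ s, f i < y) (ht : ∀ i ∈ t \ s, y ≤ f i) (hcard : #s = #t) (hne : s ≠ t) :
    ∑ i ∈ s, f i < ∑ i ∈ t, f i := by
  classical
  have hst : (s \ t).Nonempty := by
    rw [sdiff_nonempty]
    exact fun h => hne (eq_of_subset_of_card_le h hcard.ge)
  rw [← sum_inter_add_sum_sdiff s t f, ← sum_inter_add_sum_sdiff t s f, inter_comm t s]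
  refine WithTop.add_lt_add_left (sum_ne_top.2 fun i hi => (hs i (mem_inter.1 hi).1).ne_top) ?_
  calc ∑ i ∈ s \ t, f i < ∑ _i ∈ s \ t, y :=
        sum_lt_sum_of_nonempty hst fun i hi => hs i (mem_sdiff.1 hi).1
    _ = ∑ _i ∈ t \ s, y := by rw [sum_const, sum_const, card_sdiff_comm hcard]
    _ ≤ ∑ i ∈ t \ s, f i := sum_le_sum ht

end WithTop

theorem AddValuation.map_coeff_prod_X_sub_C {K ι : Type*} [CommRing K] [Fintype ι]
    (v : AddValuation K (WithTop ℝ)) (r : ι → K) (y : ℝ) :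
    v ((∏ i, (X - C (r i))).coeff (Fintype.card ι - #{i | v (r i) < y})) =
      ∑ i with v (r i) < y, v (r i) := by
  set s : Finset ι := {i | v (r i) < y}
  have hprod : ∏ i, (X - C (r i)) = ∏ i, (X + C (-r i)) := by simp [sub_eq_add_neg]
  rw [hprod, prod_X_add_C_coeff _ _ (by simp), card_univ, Nat.sub_sub_self (card_le_univ s),
    v.map_sum_eq_of_lt (mem_powersetCard_univ.2 rfl)]
  · simp [v.map_prod]
  intro t ht
  obtain ⟨hne, ht⟩ := mem_erase.1 ht
  simp only [v.map_prod, map_neg]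
  exact WithTop.sum_lt_sum_of_card_eq (y := y) (by simp [s]) (by simp [s])
    (mem_powersetCard_univ.1 ht).symm (Ne.symm hne)

section TruncatedSum

variable {ι : Type*} [Fintype ι] [DecidableEq ι]

theorem sum_min_le_sum_add_card_compl_mul (f : ι → WithTop ℝ) (y : ℝ) (s : Finset ι) :
    ∑ i, min (y : WithTop ℝ) (f i) ≤ ∑ i ∈ s, f i + ((#sᶜ * y : ℝ) : WithTop ℝ) := by
  rw [← sum_add_sum_compl s, ← nsmul_eq_mul, WithTop.coe_nsmul, ← sum_const]
  gcongr with i _ i _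
  · exact min_le_right _ _
  · exact min_le_left _ _

theorem sum_min_eq_sum_add_card_compl_mul {f : ι → WithTop ℝ} {y : ℝ} {s : Finset ι}
    (hs : ∀ i ∈ s, f i ≤ y) (hsc : ∀ i ∉ s, y ≤ f i) :
    ∑ i, min (y : WithTop ℝ) (f i) = ∑ i ∈ s, f i + ((#sᶜ * y : ℝ) : WithTop ℝ) := by
  rw [← sum_add_sum_compl s, ← nsmul_eq_mul, WithTop.coe_nsmul, ← sum_const]
  congr 1 <;> refine sum_congr rfl fun i hi => ?_
  · exact min_eq_right (hs i hi)
  · exact min_eq_left (hsc i (mem_compl.1 hi))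

theorem exists_lt_sum_min_of_card_lt (f : ι → WithTop ℝ) {N : Finset ι} (hN : ∀ i ∈ N, f i = ⊤)
    {m : ℕ} (hm : m < #N) (a : ℝ) : ∃ y : ℝ, ((a + m * y : ℝ) : WithTop ℝ) < ∑ i, min ↑y (f i) := by
  obtain ⟨d, hd⟩ := WithTop.ne_top_iff_exists.1 <| WithTop.sum_ne_top.2 fun i (_ : i ∈ Nᶜ) =>
    ((min_le_left (0 : WithTop ℝ) (f i)).trans_lt (WithTop.coe_lt_top 0)).ne
  refine ⟨max 0 (a - d + 1), ?_⟩
  set y := max 0 (a - d + 1)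
  have hm' : (m : ℝ) + 1 ≤ #N := by exact_mod_cast hm
  calc ((a + m * y : ℝ) : WithTop ℝ) < ((d + #N * y : ℝ) : WithTop ℝ) := by
        rw [WithTop.coe_lt_coe]
        nlinarith [le_max_left 0 (a - d + 1), le_max_right 0 (a - d + 1)]
    _ = ∑ i ∈ Nᶜ, min 0 (f i) + ∑ _i ∈ N, (y : WithTop ℝ) := by
        rw [← hd, sum_const, ← WithTop.coe_nsmul, nsmul_eq_mul, WithTop.coe_add]
    _ ≤ ∑ i ∈ Nᶜ, min ↑y (f i) + ∑ i ∈ N, min ↑y (f i) := by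
        gcongr with i _ i hi
        · exact WithTop.coe_le_coe.2 (le_max_left _ _)
        · simp [hN i hi]
    _ = ∑ i, min ↑y (f i) := sum_compl_add_sum N _

end TruncatedSum

theorem sum_filter_val_lt_le_of_forall_sum_min_le {n : ℕ} {c μ : Fin n → WithTop ℝ} (hc : Monotone c)
    (h : ∀ y : ℝ, ∑ i, min (y : WithTop ℝ) (c i) ≤ ∑ i, min (y : WithTop ℝ) (μ i))
    {k : ℕ} (hk : k ≤ n) :
    ∑ i with i.val < k, c i ≤ ∑ i with i.val < k, μ i := by
  set s : Finset (Fin n) := {i | i.val < k}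
  have hμ (y : ℝ) : ∑ i, min (y : WithTop ℝ) (c i) ≤ ∑ i ∈ s, μ i + ((#sᶜ * y : ℝ) : WithTop ℝ) :=
    (h y).trans (sum_min_le_sum_add_card_compl_mul μ y s)
  rcases Nat.eq_zero_or_pos k with rfl | hk0
  · simp [s]
  set j₀ : Fin n := ⟨k - 1, by omega⟩
  have hs (i : Fin n) : i ∈ s ↔ i ≤ j₀ := by simp [s, j₀, Fin.le_def]; omega
  cases hcj : c j₀ with
  | coe t =>
    have hsum := hμ t
    rw [sum_min_eq_sum_add_card_compl_mul (fun i hi => hcj ▸ hc ((hs i).1 hi))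
      (fun i hi => hcj ▸ hc (not_le.1 ((hs i).not.1 hi)).le)] at hsum
    exact (WithTop.add_le_add_iff_right WithTop.coe_ne_top).1 hsum
  | top =>
    by_contra! hlt
    obtain ⟨a, ha⟩ := WithTop.ne_top_iff_exists.1 (hlt.trans_le le_top).ne
    have hcard : #sᶜ < #(Ici j₀) := by
      refine card_lt_card ((ssubset_iff_of_subset fun i hi => ?_).2 ⟨j₀, by simp [hs]⟩)
      simpa [hs] using (not_le.1 ((hs i).not.1 (mem_compl.1 hi))).le
    obtain ⟨y, hy⟩ := exists_lt_sum_min_of_card_lt c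
      (fun i hi => top_le_iff.1 (hcj ▸ hc (mem_Ici.1 hi))) hcard a
    have := hy.trans_le (hμ y)
    rw [← ha, ← WithTop.coe_add] at this
    exact lt_irrefl _ this

theorem minplusCharCoeff_self {n : ℕ} (A : Matrix (Fin n) (Fin n) (WithTop ℝ)) :
    minplusCharCoeff n A n = 0 := by
  rw [minplusCharCoeff, Nat.sub_self, minplusTrace]
  apply le_antisymm
  · refine (inf_le (b := ((∅ : Finset (Fin n)), (1 : Equiv.Perm (Fin n)))) (by simp)).trans ?_
    simp
  · refine Finset.le_inf fun p hp => ?_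
    rw [mem_product, mem_powersetCard_univ, card_eq_zero] at hp
    split_ifs <;> simp [hp.1]

theorem sum_min_le_sum_min_valuation_of_charpoly_eq_prod {K ι : Type*} [CommRing K] [Nontrivial K]
    [Fintype ι] (v : AddValuation K (WithTop ℝ)) {n : ℕ} (A : Matrix (Fin n) (Fin n) K)
    {c : Fin n → WithTop ℝ}
    (hfact : ∀ y : ℝ,
      tropEval (minplusCharCoeff n fun i j => v (A i j)) n y =
        minplusCharCoeff n (fun i j => v (A i j)) n + ∑ i : Fin n, min (y : WithTop ℝ) (c i))
    {r : ι → K} (hr : A.charpoly = ∏ i, (X - C (r i))) (y : ℝ) :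
    ∑ i, min (y : WithTop ℝ) (c i) ≤ ∑ i, min (y : WithTop ℝ) (v (r i)) := by
  set s : Finset ι := {i | v (r i) < y}
  have hn : Fintype.card ι = n := by
    simpa using (congrArg natDegree hr).symm.trans (A.charpoly_natDegree_eq_dim)
  have hm : Fintype.card ι - #s ≤ n := hn ▸ Nat.sub_le _ _
  calc ∑ i, min (y : WithTop ℝ) (c i)
      = tropEval (minplusCharCoeff n fun i j => v (A i j)) n y := by
        rw [hfact, minplusCharCoeff_self (fun i j => v (A i j)), zero_add]
    _ ≤ minplusCharCoeff n (fun i j => v (A i j)) (Fintype.card ι - #s) +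
          (((Fintype.card ι - #s : ℕ) * y : ℝ) : WithTop ℝ) :=
        inf_le (mem_range.2 (Nat.lt_succ_of_le hm))
    _ ≤ v (A.charpoly.coeff (Fintype.card ι - #s)) +
          (((Fintype.card ι - #s : ℕ) * y : ℝ) : WithTop ℝ) := by
        gcongr
        exact minplusCharCoeff_le_map_coeff_charpoly v A hm
    _ = ∑ i ∈ s, v (r i) + ((#sᶜ * y : ℝ) : WithTop ℝ) := by
        rw [hr, v.map_coeff_prod_X_sub_C, card_compl]
    _ = ∑ i, min (y : WithTop ℝ) (v (r i)) :=
        (sum_min_eq_sum_add_card_compl_mul (fun i hi => (mem_filter.1 hi).2.le)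
          fun i hi => not_lt.1 fun h => hi (mem_filter.2 ⟨mem_univ i, h⟩)).symm

theorem stmt_8_general {K : Type*} [Field K] (ν : K → WithTop ℝ)
    (hν0 : ∀ a, ν a = ⊤ ↔ a = 0)
    (hνadd : ∀ a b, min (ν a) (ν b) ≤ ν (a + b))
    (hνmul : ∀ a b, ν (a * b) = ν a + ν b)
    (n : ℕ) (A : Matrix (Fin n) (Fin n) K)
    (c : Fin n → WithTop ℝ) (hc : Monotone c)
    (hfact : ∀ y : ℝ,
      tropEval (minplusCharCoeff n fun i j => ν (A i j)) n y =
        minplusCharCoeff n (fun i j => ν (A i j)) n +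
          ∑ i : Fin n, min (y : WithTop ℝ) (c i))
    (μ : Fin n → WithTop ℝ)
    (hroots : Multiset.map ν (Matrix.charpoly A).roots =
      (↑(List.ofFn μ) : Multiset (WithTop ℝ))) :
    ∀ k : ℕ, k ≤ n →
      ∑ i ∈ Finset.univ.filter (fun i : Fin n => i.val < k), c i ≤
      ∑ i ∈ Finset.univ.filter (fun i : Fin n => i.val < k), μ i := by
  intro k hk
  have hν1 : ν 1 = 0 := by
    have h : ν 1 + ν 1 = ν 1 + 0 := by rw [← hνmul, one_mul, add_zero]
    exact WithTop.add_left_cancel (by simp [hν0]) h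
  let v : AddValuation K (WithTop ℝ) := AddValuation.of ν ((hν0 0).2 rfl) hν1 hνadd hνmul
  obtain ⟨m, r, hr⟩ : ∃ (m : ℕ) (r : Fin m → K), univ.val.map r = A.charpoly.roots :=
    ⟨_, _, by rw [Fin.univ_val_map, List.ofFn_get, Multiset.coe_toList]⟩
  have hchar : A.charpoly = ∏ i, (X - C (r i)) := by
    have hcard : A.charpoly.roots.card = A.charpoly.natDegree := by
      simpa [Matrix.charpoly_natDegree_eq_dim] using congrArg Multiset.card hroots
    rw [← prod_multiset_X_sub_C_of_monic_of_roots_card_eq A.charpoly_monic hcard,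
      ← hr, Multiset.map_map]
    rfl
  have hμ (y : ℝ) : ∑ i, min (y : WithTop ℝ) (ν (r i)) = ∑ i, min (y : WithTop ℝ) (μ i) := by
    calc ∑ i, min (y : WithTop ℝ) (ν (r i))
        = ((A.charpoly.roots.map ν).map (min (y : WithTop ℝ))).sum := by
          rw [← hr, Multiset.map_map, Multiset.map_map]; rfl
      _ = ∑ i, min (y : WithTop ℝ) (μ i) := by
          rw [hroots, ← Fin.univ_val_map, Multiset.map_map]; rfl
  exact sum_filter_val_lt_le_of_forall_sum_min_le hc (fun y =>
    (sum_min_le_sum_min_valuation_of_charpoly_eq_prod v A hfact hchar y).trans (hμ y).le) hk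

/-- Majorization of valuations of eigenvalues: the increasingly ordered
valuations `μ` of the eigenvalues of `𝒜` (roots of the characteristic
polynomial, with multiplicities) are weakly super-majorized by the
increasingly ordered tropical eigenvalues `c` of `A = (ν(𝒜ᵢⱼ))`: for every
`k ≤ n`, the sum of the `k` smallest tropical eigenvalues is at most the sum of
the `k` smallest valuations of eigenvalues. -/
theorem stmt_8 {K : Type*} [Field K] [IsAlgClosed K] (ν : K → WithTop ℝ)
    (hν0 : ∀ a, ν a = ⊤ ↔ a = 0)
    (hνadd : ∀ a b, min (ν a) (ν b) ≤ ν (a + b))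
    (hνmul : ∀ a b, ν (a * b) = ν a + ν b)
    (n : ℕ) (A : Matrix (Fin n) (Fin n) K)
    (c : Fin n → WithTop ℝ) (hc : Monotone c)
    (hfact : ∀ y : ℝ,
      tropEval (minplusCharCoeff n fun i j => ν (A i j)) n y =
        minplusCharCoeff n (fun i j => ν (A i j)) n +
          ∑ i : Fin n, min (y : WithTop ℝ) (c i))
    (μ : Fin n → WithTop ℝ) (hμ : Monotone μ)
    (hroots : Multiset.map ν (Matrix.charpoly A).roots =
      (↑(List.ofFn μ) : Multiset (WithTop ℝ))) :
    ∀ k : ℕ, k ≤ n →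
      ∑ i ∈ Finset.univ.filter (fun i : Fin n => i.val < k), c i ≤
      ∑ i ∈ Finset.univ.filter (fun i : Fin n => i.val < k), μ i :=
  stmt_8_general ν hν0 hνadd hνmul n A c hc hfact μ hroots
end

section
/- The minimal tropical algebraic eigenvalue of a matrix \(A\in(\mathbb{R}\cup\{+\infty\})^{n\times n}\), i.e., the smallest root of its min-plus characteristic polynomial \(\mathrm{per}(YI\oplus A)\), equals the minimal circuit mean \(\min_{k=1,\ldots,n}\min_{i_1,\ldots,i_k}\frac{1}{k}(A_{i_1i_2}+\cdots+A_{i_ki_1})\). -/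
open scoped Classical

/-!
For real `y`, the factorization `hfact` shows that `y ≤ c₀` iff the min-plus characteristic
polynomial takes the value `n y` at `y`, i.e. iff `tr_m A ≥ m y` for all `m ≤ n`. A min-plus trace
is a minimum over partial permutations, whose weights split into the weights of their cycles;
conversely, a closed walk that is not simple splits at a repeated vertex into two shorter closed
walks. Hence the trace bounds hold iff every circuit of length `k ≤ n` weighs at least `k y`, i.e.
iff `y` lies below every circuit mean. An element of `WithTop ℝ` is determined by the reals below
it, so `c₀` is the least circuit mean.
-/

open Finset

variable {ι R : Type*}

section Walk

variable [AddCommMonoid R] (A : Matrix ι ι R)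

def walkWeight (g : ℕ → ι) (k : ℕ) : R :=
  ∑ j ∈ range k, A (g j) (g (j + 1))

variable {A}

lemma walkWeight_congr {g g' : ℕ → ι} {k : ℕ} (h : ∀ j ≤ k, g j = g' j) :
    walkWeight A g k = walkWeight A g' k :=
  sum_congr rfl fun j hj => by
    have hj : j < k := mem_range.mp hj
    rw [h j hj.le, h (j + 1) hj]

variable (A)

lemma walkWeight_add (g : ℕ → ι) (p q : ℕ) :
    walkWeight A g (p + q) = walkWeight A g p + walkWeight A (fun j => g (p + j)) q :=
  sum_range_add _ p q

lemma sum_range_circuit_eq_walkWeight (f : ℕ → ι) (k : ℕ) :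
    ∑ j ∈ range k, A (f j) (f ((j + 1) % k)) = walkWeight A (fun j => f (j % k)) k :=
  sum_congr rfl fun j hj => by simp only [Nat.mod_eq_of_lt (mem_range.mp hj)]

/-- Cutting a walk at a repeated vertex `g a = g b` leaves the closed walk from `a` to `b` and the
walk that jumps from `a` straight to `b`. -/
lemma walkWeight_eq_add_of_eq {g : ℕ → ι} {a b k : ℕ} (hab : a ≤ b) (hbk : b ≤ k)
    (hg : g a = g b) :
    walkWeight A g k = walkWeight A (fun j => g (a + j)) (b - a) +
      walkWeight A (fun j => if j < a then g j else g (j + (b - a))) (k - (b - a)) := by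
  obtain ⟨d, rfl⟩ := Nat.exists_eq_add_of_le hab
  obtain ⟨r, rfl⟩ := Nat.exists_eq_add_of_le hbk
  set g' : ℕ → ι := fun j => if j < a then g j else g (j + d)
  have hhead : walkWeight A g' a = walkWeight A g a := by
    refine walkWeight_congr fun j hj => ?_
    rcases hj.lt_or_eq with hj | rfl
    · simp [g', hj]
    · simp [g', hg]
  have htail : walkWeight A (fun j => g' (a + j)) r = walkWeight A (fun j => g (a + d + j)) r := by
    congr 1
    funext j
    simp only [g', show ¬a + j < a by omega, if_false]
    congr 1
    omega
  rw [show a + d - a = d by omega, show a + d + r - d = a + r by omega, walkWeight_add A g (a + d),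
    walkWeight_add A g a, walkWeight_add A g' a, hhead, htail]
  abel

lemma walkWeight_mod_eq {g : ℕ → ι} {k : ℕ} (hg : g k = g 0) :
    walkWeight A (fun j => g (j % k)) k = walkWeight A g k :=
  walkWeight_congr fun j hj => by
    rcases hj.lt_or_eq with hj | rfl
    · rw [Nat.mod_eq_of_lt hj]
    · rw [Nat.mod_self, hg]

lemma finite_range_walkWeight [Finite ι] (k : ℕ) :
    (Set.range fun g : ℕ → ι => walkWeight A g k).Finite := by
  refine (Set.finite_range fun h : Fin (k + 1) → ι => walkWeight A (fun j => h (Fin.ofNat _ j)) k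
    ).subset ?_
  rintro _ ⟨g, rfl⟩
  exact ⟨fun i => g i, walkWeight_congr fun j hj => by
    simp [Nat.mod_eq_of_lt (Nat.lt_succ_of_le hj)]⟩

lemma exists_perm_sum_eq_walkWeight {g : ℕ → ι} {k : ℕ} (hinj : Set.InjOn g (Set.Iio k))
    (hg : g k = g 0) :
    ∃ (S : Finset ι) (σ : Equiv.Perm ι), #S = k ∧ (∀ i ∉ S, σ i = i) ∧
      ∑ i ∈ S, A i (σ i) = walkWeight A g k := by
  set l : List ι := (List.range k).map g
  have hlen : l.length = k := by simp [l]
  have hnodup : l.Nodup := List.Nodup.map_on (fun a ha b hb => hinj (by simpa using ha)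
    (by simpa using hb)) List.nodup_range
  have hinj' : Set.InjOn g ↑(range k) := by simpa using hinj
  refine ⟨(range k).image g, l.formPerm, by rw [card_image_of_injOn hinj', card_range],
    fun i hi => List.formPerm_apply_of_notMem fun hil => hi ?_, ?_⟩
  · simpa [l] using hil
  rw [sum_image hinj']
  refine sum_congr rfl fun j hj => ?_
  have hj : j < k := mem_range.mp hj
  have hgj : g j = l[j]'(by omega) := by simp [l]
  have hsucc : g ((j + 1) % k) = g (j + 1) := by
    rcases (show j + 1 ≤ k by omega).lt_or_eq with h | h
    · rw [Nat.mod_eq_of_lt h]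
    · rw [h, Nat.mod_self, hg]
  rw [hgj, List.formPerm_apply_getElem _ hnodup j (by omega), ← hgj]
  simp [l, hlen, hsucc]

end Walk

section Orbit

variable [AddCommMonoid R] (A : Matrix ι ι R) (σ : Equiv.Perm ι) (x : ι)

noncomputable def permOrbit : Finset ι :=
  (range (Function.minimalPeriod σ x)).image fun j => (σ ^ j) x

lemma pow_mod_minimalPeriod_apply (j : ℕ) :
    (σ ^ (j % Function.minimalPeriod σ x)) x = (σ ^ j) x := by
  have h := Function.iterate_mod_minimalPeriod_eq (f := σ) (x := x) (n := j)
  rwa [Equiv.Perm.iterate_eq_pow, Equiv.Perm.iterate_eq_pow] at h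

lemma pow_minimalPeriod_apply : (σ ^ Function.minimalPeriod σ x) x = x := by
  have h := Function.iterate_minimalPeriod (f := σ) (x := x)
  rwa [Equiv.Perm.iterate_eq_pow] at h

lemma injOn_pow_apply_range :
    Set.InjOn (fun j => (σ ^ j) x) ↑(range (Function.minimalPeriod σ x)) := by
  simpa [Equiv.Perm.iterate_eq_pow] using
    Function.iterate_injOn_Iio_minimalPeriod (f := σ) (x := x)

lemma card_permOrbit : #(permOrbit σ x) = Function.minimalPeriod σ x := by
  rw [permOrbit, card_image_of_injOn (injOn_pow_apply_range σ x), card_range]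

lemma sum_permOrbit_eq_walkWeight :
    ∑ i ∈ permOrbit σ x, A i (σ i) =
      walkWeight A (fun j => (σ ^ j) x) (Function.minimalPeriod σ x) := by
  rw [permOrbit, sum_image (injOn_pow_apply_range σ x)]
  refine sum_congr rfl fun j _ => ?_
  simp only [pow_succ', Equiv.Perm.mul_apply]

variable [Finite ι]

lemma minimalPeriod_perm_pos : 0 < Function.minimalPeriod σ x :=
  Function.minimalPeriod_pos_of_mem_periodicPts ⟨orderOf σ, orderOf_pos σ, by
    simp [Function.IsPeriodicPt, Function.IsFixedPt, Equiv.Perm.iterate_eq_pow,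
      pow_orderOf_eq_one]⟩

lemma mem_permOrbit_iff {i : ι} : i ∈ permOrbit σ x ↔ σ.SameCycle x i := by
  refine ⟨?_, fun h => ?_⟩
  · rw [permOrbit, mem_image]
    rintro ⟨j, -, rfl⟩
    exact ⟨j, by simp⟩
  · obtain ⟨j, rfl⟩ := h.exists_nat_pow_eq
    exact mem_image.mpr ⟨_, mem_range.mpr (Nat.mod_lt _ (minimalPeriod_perm_pos σ x)),
      pow_mod_minimalPeriod_apply σ x j⟩

end Orbit

section Bounds

variable [AddCommMonoid R] [PartialOrder R] [IsOrderedAddMonoid R] (A : Matrix ι ι R) (y : R)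

theorem nsmul_le_walkWeight_of_forall_perm
    (hperm : ∀ (S : Finset ι) (σ : Equiv.Perm ι), (∀ i ∉ S, σ i = i) →
      #S • y ≤ ∑ i ∈ S, A i (σ i))
    (k : ℕ) (g : ℕ → ι) (hg : g k = g 0) : k • y ≤ walkWeight A g k := by
  induction k using Nat.strong_induction_on generalizing g with
  | _ k ih =>
  by_cases hinj : Set.InjOn g (Set.Iio k)
  · obtain ⟨S, σ, hcard, hfix, hsum⟩ := exists_perm_sum_eq_walkWeight A hinj hg
    rw [← hsum, ← hcard]
    exact hperm S σ hfix
  obtain ⟨a, b, hab, hbk, hgab⟩ : ∃ a b, a < b ∧ b < k ∧ g a = g b := by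
    simp only [Set.InjOn, Set.mem_Iio, not_forall] at hinj
    obtain ⟨a, ha, b, hb, hgab, hne⟩ := hinj
    rcases lt_or_gt_of_ne hne with h | h
    · exact ⟨a, b, h, hb, hgab⟩
    · exact ⟨b, a, h, ha, hgab.symm⟩
  have hloop := ih (b - a) (by omega) (fun j => g (a + j))
    (by simp [← hgab, show a + (b - a) = b by omega])
  have hrest := ih (k - (b - a)) (by omega) (fun j => if j < a then g j else g (j + (b - a))) (by
    rcases Nat.eq_zero_or_pos a with rfl | ha
    · simp [show k - b + b = k by omega, hg, hgab]
    · simp [show ¬ k - (b - a) < a by omega, show k - (b - a) + (b - a) = k by omega, ha, hg])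
  calc k • y = (b - a) • y + (k - (b - a)) • y := by rw [← add_nsmul]; congr 1; omega
    _ ≤ _ := add_le_add hloop hrest
    _ = walkWeight A g k := (walkWeight_eq_add_of_eq A hab.le hbk.le hgab).symm

theorem nsmul_le_sum_perm_of_forall_walkWeight [Fintype ι]
    (hwalk : ∀ k, 0 < k → k ≤ Fintype.card ι → ∀ g : ℕ → ι, g k = g 0 →
      k • y ≤ walkWeight A g k)
    (σ : Equiv.Perm ι) (S : Finset ι) (hS : ∀ i ∈ S, σ i ∈ S) :
    #S • y ≤ ∑ i ∈ S, A i (σ i) := by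
  induction S using Finset.strongInduction with
  | H S ih =>
  rcases S.eq_empty_or_nonempty with rfl | ⟨x, hx⟩
  · simp
  set O := permOrbit σ x
  have hpow : ∀ j : ℕ, (σ ^ j) x ∈ S := by
    intro j
    induction j with
    | zero => simpa using hx
    | succ j ihj => simpa [pow_succ'] using hS _ ihj
  have hOS : O ⊆ S := fun i hi => by
    obtain ⟨j, -, rfl⟩ := mem_image.mp hi
    exact hpow j
  have hxO : x ∈ O := (mem_permOrbit_iff σ x).mpr (Equiv.Perm.SameCycle.refl σ x)
  have hrest := ih (S \ O) (sdiff_ssubset hOS ⟨x, hxO⟩) fun i hi => by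
    rw [mem_sdiff, mem_permOrbit_iff, Equiv.Perm.sameCycle_apply_right, ← mem_permOrbit_iff] at *
    exact ⟨hS i hi.1, hi.2⟩
  have horbit : #O • y ≤ ∑ i ∈ O, A i (σ i) := by
    rw [card_permOrbit, sum_permOrbit_eq_walkWeight]
    refine hwalk _ (minimalPeriod_perm_pos σ x) ?_ _ ?_
    · rw [← card_permOrbit]; exact card_le_univ O
    · exact pow_minimalPeriod_apply σ x
  calc #S • y = #(S \ O) • y + #O • y := by rw [← add_nsmul, card_sdiff_add_card_eq_card hOS]
    _ ≤ _ := add_le_add hrest horbit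
    _ = ∑ i ∈ S, A i (σ i) := sum_sdiff hOS

theorem forall_nsmul_le_sum_perm_iff [Fintype ι] :
    (∀ (S : Finset ι) (σ : Equiv.Perm ι), (∀ i ∉ S, σ i = i) → #S • y ≤ ∑ i ∈ S, A i (σ i)) ↔
      ∀ k, 0 < k → k ≤ Fintype.card ι → ∀ g : ℕ → ι, g k = g 0 → k • y ≤ walkWeight A g k := by
  refine ⟨fun h k _ _ => nsmul_le_walkWeight_of_forall_perm A y h k, fun h S σ hfix => ?_⟩
  refine nsmul_le_sum_perm_of_forall_walkWeight A y h σ S fun i hi => ?_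
  by_contra hσi
  rw [σ.injective (hfix _ hσi)] at hσi
  exact hσi hi

end Bounds

section MinPlus

variable {n : ℕ} (A : Matrix (Fin n) (Fin n) (WithTop ℝ))

lemma le_minplusTrace_iff {m : ℕ} {a : WithTop ℝ} :
    a ≤ minplusTrace n A m ↔ ∀ (S : Finset (Fin n)) (σ : Equiv.Perm (Fin n)), #S = m →
      (∀ i ∉ S, σ i = i) → a ≤ ∑ i ∈ S, A i (σ i) := by
  simp only [minplusTrace, Finset.le_inf_iff, mem_product, mem_powersetCard, subset_univ, true_and,
    mem_univ, and_true, Prod.forall]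
  refine forall₂_congr fun S σ => forall_congr' fun _ => ?_
  by_cases h : ∀ i ∉ S, σ i = i
  · rw [if_pos h]
    exact ⟨fun ha _ => ha, fun ha => ha h⟩
  · rw [if_neg h]
    exact ⟨fun _ hh => absurd hh h, fun _ => le_top⟩

lemma minplusTrace_zero : minplusTrace n A 0 = 0 := by
  refine le_antisymm ?_ ((le_minplusTrace_iff A).mpr fun S σ hS _ => by
    rw [card_eq_zero.mp hS, sum_empty])
  exact ((le_minplusTrace_iff A).mp le_rfl ∅ 1 card_empty fun _ _ => rfl).trans_eq sum_empty

lemma forall_nsmul_le_minplusTrace_iff (y : WithTop ℝ) :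
    (∀ m ≤ n, m • y ≤ minplusTrace n A m) ↔
      ∀ (S : Finset (Fin n)) (σ : Equiv.Perm (Fin n)), (∀ i ∉ S, σ i = i) →
        #S • y ≤ ∑ i ∈ S, A i (σ i) := by
  refine ⟨fun h S σ hfix => ?_, fun h m _ => (le_minplusTrace_iff A).mpr fun S σ hS hfix =>
    hS ▸ h S σ hfix⟩
  have hS : #S ≤ n := by simpa using card_le_univ S
  exact (le_minplusTrace_iff A).mp (h _ hS) S σ rfl hfix

lemma coe_natCast_mul_eq_nsmul (k : ℕ) (y : ℝ) :
    (((k : ℝ) * y : ℝ) : WithTop ℝ) = k • (y : WithTop ℝ) := by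
  rw [← nsmul_eq_mul, WithTop.coe_nsmul]

lemma nsmul_le_tropEval_minplusCharCoeff_iff (y : ℝ) :
    n • (y : WithTop ℝ) ≤ tropEval (minplusCharCoeff n A) n y ↔
      ∀ m ≤ n, m • (y : WithTop ℝ) ≤ minplusTrace n A m := by
  have hshift : ∀ k ≤ n, n • (y : WithTop ℝ) ≤ minplusTrace n A (n - k) + k • (y : WithTop ℝ) ↔
      (n - k) • (y : WithTop ℝ) ≤ minplusTrace n A (n - k) := fun k hk => by
    rw [show n • (y : WithTop ℝ) = (n - k) • y + k • y by rw [← add_nsmul, Nat.sub_add_cancel hk]]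
    exact WithTop.add_le_add_iff_right (by rw [← WithTop.coe_nsmul]; exact WithTop.coe_ne_top)
  simp only [tropEval, Finset.le_inf_iff, mem_range, Nat.lt_succ_iff, minplusCharCoeff,
    coe_natCast_mul_eq_nsmul]
  refine ⟨fun h m hm => ?_, fun h k hk => (hshift k hk).mpr (h _ (Nat.sub_le n k))⟩
  have := (hshift (n - m) (Nat.sub_le n m)).mp (h _ (Nat.sub_le n m))
  rwa [Nat.sub_sub_self hm] at this

end MinPlus

lemma nsmul_le_sum_min_iff {s : Finset ι} {c : ι → WithTop ℝ} {y : ℝ} :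
    #s • (y : WithTop ℝ) ≤ ∑ i ∈ s, min (y : WithTop ℝ) (c i) ↔
      ∀ i ∈ s, (y : WithTop ℝ) ≤ c i := by
  refine ⟨fun h i hi => ?_, fun h => ?_⟩
  · by_contra! hci
    have hrest : ∑ j ∈ s.erase i, min (y : WithTop ℝ) (c j) ≤ #(s.erase i) • (y : WithTop ℝ) :=
      (sum_le_sum fun j _ => min_le_left _ _).trans_eq (sum_const _)
    have hlt := WithTop.add_lt_add_of_lt_of_le
      (ne_top_of_le_ne_top (by rw [← WithTop.coe_nsmul]; exact WithTop.coe_ne_top) hrest)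
      ((min_le_right (y : WithTop ℝ) _).trans_lt hci) hrest
    rw [add_sum_erase s (fun j => min (y : WithTop ℝ) (c j)) hi, ← succ_nsmul',
      card_erase_add_one hi] at hlt
    exact h.not_gt hlt
  · rw [← sum_const]
    exact (sum_congr rfl fun i hi => (min_eq_left (h i hi)).symm).le

section CircuitMeans

variable (n : ℕ) (A : Matrix (Fin n) (Fin n) (WithTop ℝ))

def circuitMeans : Set (WithTop ℝ) :=
  {t | ∃ k : ℕ, 1 ≤ k ∧ k ≤ n ∧ ∃ f : ℕ → Fin n,
    t = WithTop.map (fun r : ℝ => r / (k : ℝ)) (∑ j ∈ range k, A (f j) (f ((j + 1) % k)))}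

lemma circuitMeans_finite : (circuitMeans n A).Finite := by
  refine ((Set.finite_Icc 1 n).biUnion fun k _ =>
    (finite_range_walkWeight A k).image (WithTop.map fun r : ℝ => r / (k : ℝ))).subset ?_
  rintro _ ⟨k, hk1, hkn, f, rfl⟩
  exact Set.mem_biUnion (x := k) ⟨hk1, hkn⟩
    ⟨_, ⟨_, rfl⟩, by rw [sum_range_circuit_eq_walkWeight]⟩

lemma exists_isLeast_circuitMeans (hn : 0 < n) : ∃ D, IsLeast (circuitMeans n A) D := by
  have hfin := circuitMeans_finite n A
  have hne : (circuitMeans n A).Nonempty := ⟨_, 1, le_rfl, hn, fun _ => ⟨0, hn⟩, rfl⟩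
  exact ⟨_, by simpa using hfin.toFinset.isLeast_min' (by simpa using hne)⟩

lemma coe_le_map_div_iff {k : ℕ} (hk : 0 < k) (y : ℝ) (w : WithTop ℝ) :
    (y : WithTop ℝ) ≤ WithTop.map (fun r : ℝ => r / (k : ℝ)) w ↔ k • (y : WithTop ℝ) ≤ w := by
  cases w with
  | top => simp
  | coe r =>
    rw [WithTop.map_coe, ← WithTop.coe_nsmul, WithTop.coe_le_coe, WithTop.coe_le_coe,
      le_div_iff₀ (by exact_mod_cast hk), nsmul_eq_mul, mul_comm]

lemma coe_mem_lowerBounds_circuitMeans_iff (y : ℝ) :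
    (y : WithTop ℝ) ∈ lowerBounds (circuitMeans n A) ↔
      ∀ k, 0 < k → k ≤ n → ∀ g : ℕ → Fin n, g k = g 0 →
        k • (y : WithTop ℝ) ≤ walkWeight A g k := by
  refine ⟨fun h k hk hkn g hg => ?_, ?_⟩
  · have := h ⟨k, hk, hkn, g, rfl⟩
    rwa [coe_le_map_div_iff hk, sum_range_circuit_eq_walkWeight, walkWeight_mod_eq A hg] at this
  · rintro h _ ⟨k, hk, hkn, f, rfl⟩
    rw [coe_le_map_div_iff hk, sum_range_circuit_eq_walkWeight]
    exact h k hk hkn _ (by simp)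

end CircuitMeans

/-- The minimal tropical eigenvalue (smallest root `c 0` of the min-plus
characteristic polynomial, whose roots are `c 0 ≤ ⋯ ≤ c (n-1)`) is the minimal
circuit mean `min_{1 ≤ k ≤ n} min_{i₁,…,i_k} (A_{i₁ i₂} + ⋯ + A_{i_k i₁}) / k`. -/
theorem stmt_9 (n : ℕ) (hn : 0 < n) (A : Matrix (Fin n) (Fin n) (WithTop ℝ))
    (c : Fin n → WithTop ℝ) (hc : Monotone c)
    (hfact : ∀ y : ℝ,
      tropEval (minplusCharCoeff n A) n y =
        minplusCharCoeff n A n + ∑ i : Fin n, min (y : WithTop ℝ) (c i)) :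
    IsLeast {t : WithTop ℝ | ∃ k : ℕ, 1 ≤ k ∧ k ≤ n ∧ ∃ f : ℕ → Fin n,
        t = WithTop.map (fun r : ℝ => r / (k : ℝ))
          (∑ j ∈ Finset.range k, A (f j) (f ((j + 1) % k)))}
      (c ⟨0, hn⟩) := by
  obtain ⟨D, hD⟩ := exists_isLeast_circuitMeans n A hn
  suffices c ⟨0, hn⟩ = D from this ▸ hD
  refine WithTop.eq_of_forall_coe_le_iff fun y => ?_
  have hconst : minplusCharCoeff n A n = 0 := by
    rw [minplusCharCoeff, Nat.sub_self, minplusTrace_zero]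
  calc (y : WithTop ℝ) ≤ c ⟨0, hn⟩ ↔ ∀ i ∈ univ, (y : WithTop ℝ) ≤ c i :=
        ⟨fun h i _ => h.trans (hc (Nat.zero_le i)), fun h => h _ (mem_univ _)⟩
    _ ↔ n • (y : WithTop ℝ) ≤ tropEval (minplusCharCoeff n A) n y := by
        rw [hfact, hconst, zero_add, ← nsmul_le_sum_min_iff, card_univ, Fintype.card_fin]
    _ ↔ ∀ k, 0 < k → k ≤ n → ∀ g : ℕ → Fin n, g k = g 0 →
          k • (y : WithTop ℝ) ≤ walkWeight A g k := by
        rw [nsmul_le_tropEval_minplusCharCoeff_iff, forall_nsmul_le_minplusTrace_iff,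
          forall_nsmul_le_sum_perm_iff, Fintype.card_fin]
    _ ↔ (y : WithTop ℝ) ≤ D := by
        rw [← coe_mem_lowerBounds_circuitMeans_iff, le_isGLB_iff hD.isGLB]
end

section
/- Let \(\mathcal P=\sum_{j=0}^n\mathcal P_jY^j\) be monic (\(\mathcal P_n=1\)) with coefficients germs of continuous complex functions of \(\epsilon\). Suppose all the roots of \(\mathcal P(\epsilon,\cdot)\) are continuous branches \(\mathcal Y_1,\ldots,\mathcal Y_n\) with first-order asymptotics \(\mathcal Y_j(\epsilon)\sim y_j\epsilon^{Y_j}\), \(Y_1\le\cdots\le Y_n\). Then there exist \(p_j\in\mathbb C\) and \(P_j\in\mathbb R\cup\{+\infty\}\) with \(\mathcal P_j(\epsilon)=p_j\epsilon^{P_j}+o(\epsilon^{P_j})\), \(p_n=1\), \(P_n=0\), the tropical roots of \(P=\bigoplus_jP_jY^j\) are exactly \((Y_1,\ldots,Y_n)\), \(p_0\ne 0\) or \(P_0=+\infty\), and \(p_{n-i}\ne 0\) for every i with \(Y_i<Y_{i+1}\). -/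
open scoped Classical

/-- `f(ε) ≃ a ε^A` as `ε → 0⁺`. -/
def simeqTo (f : ℝ → ℂ) (a : ℂ) (A : WithTop ℝ) : Prop :=
  (A = ⊤ ∧ ∀ᶠ ε in nhdsWithin 0 (Set.Ioi 0), f ε = 0) ∨
  ∃ r : ℝ, A = (r : WithTop ℝ) ∧
    Filter.Tendsto (fun ε : ℝ => f ε / ((ε ^ r : ℝ) : ℂ)) (nhdsWithin 0 (Set.Ioi 0)) (nhds a)

/-- `f(ε) ∼ a ε^A`: a first order asymptotics (the coefficient is non-zero when
the exponent is finite). -/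
def firstOrder (f : ℝ → ℂ) (a : ℂ) (A : WithTop ℝ) : Prop :=
  simeqTo f a A ∧ (A ≠ ⊤ → a ≠ 0)

/-!
By Vieta, `𝒫_{n-m} = (-1)^m eₘ(𝒴₁, …, 𝒴ₙ)`. Each product `∏_{i ∈ t} 𝒴ᵢ` over an `m`-set `t` is
`≃ (∏_{i ∈ t} yᵢ) ε^{∑_{i ∈ t} Yᵢ}`, and since `Y` is monotone the smallest of these exponents is
`Y₁ + ⋯ + Yₘ`, attained by the initial segment; so `P_{n-m} = Y₁ + ⋯ + Yₘ`, whose min-plus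
polynomial is `∑ᵢ min(z, Yᵢ)`, i.e. has tropical roots `Y`. When `Yₘ < Yₘ₊₁` the initial segment
is the only minimiser, so `p_{n-m} = ± y₁ ⋯ yₘ ≠ 0`.
-/

section

open Filter Topology Finset

namespace simeqTo

variable {f g : ℝ → ℂ} {a b : ℂ} {A B : WithTop ℝ}

lemma eventually_eq_zero (h : simeqTo f a ⊤) : ∀ᶠ ε in 𝓝[>] 0, f ε = 0 := by
  rcases h with ⟨-, h⟩ | ⟨r, hr, -⟩
  · exact h
  · exact absurd hr.symm WithTop.coe_ne_top

lemma tendsto {r : ℝ} (h : simeqTo f a r) :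
    Tendsto (fun ε => f ε / ((ε ^ r : ℝ) : ℂ)) (𝓝[>] 0) (𝓝 a) := by
  rcases h with ⟨hr, -⟩ | ⟨s, hs, h⟩
  · exact absurd hr WithTop.coe_ne_top
  · rwa [WithTop.coe_eq_coe.mp hs]

lemma of_tendsto {r : ℝ} (h : Tendsto (fun ε => f ε / ((ε ^ r : ℝ) : ℂ)) (𝓝[>] 0) (𝓝 a)) :
    simeqTo f a r :=
  Or.inr ⟨r, rfl, h⟩

lemma of_eventually_eq_zero (hf : ∀ᶠ ε in 𝓝[>] 0, f ε = 0) (A : WithTop ℝ) :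
    simeqTo f 0 A := by
  induction A with
  | top => exact Or.inl ⟨rfl, hf⟩
  | coe r =>
    exact of_tendsto (tendsto_const_nhds.congr' (by filter_upwards [hf] with ε hε; simp [hε]))

lemma congr' (h : simeqTo f a A) (hfg : f =ᶠ[𝓝[>] 0] g) : simeqTo g a A := by
  rcases h with ⟨hA, h⟩ | ⟨r, rfl, h⟩
  · exact Or.inl ⟨hA, by filter_upwards [h, hfg] with ε h1 h2; rw [← h2, h1]⟩
  · exact of_tendsto (h.congr' (by filter_upwards [hfg] with ε hε; rw [hε]))

lemma const_mul (h : simeqTo f a A) (c : ℂ) : simeqTo (fun ε => c * f ε) (c * a) A := by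
  rcases h with ⟨rfl, h⟩ | ⟨r, rfl, h⟩
  · exact Or.inl ⟨rfl, by filter_upwards [h] with ε hε; simp [hε]⟩
  · exact of_tendsto ((h.const_mul c).congr fun ε => by simp only [mul_div_assoc])

lemma add (hf : simeqTo f a A) (hg : simeqTo g b A) :
    simeqTo (fun ε => f ε + g ε) (a + b) A := by
  induction A with
  | top =>
    exact Or.inl ⟨rfl, by
      filter_upwards [hf.eventually_eq_zero, hg.eventually_eq_zero] with ε h1 h2; simp [h1, h2]⟩
  | coe r => exact of_tendsto ((hf.tendsto.add hg.tendsto).congr fun ε => (add_div _ _ _).symm)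

lemma sum {ι : Type*} (s : Finset ι) {f : ι → ℝ → ℂ} {a : ι → ℂ}
    (h : ∀ i ∈ s, simeqTo (f i) (a i) A) :
    simeqTo (fun ε => ∑ i ∈ s, f i ε) (∑ i ∈ s, a i) A := by
  classical
  induction s using Finset.induction_on with
  | empty => simpa using of_eventually_eq_zero (f := fun _ => 0) (by simp) A
  | insert i s hi ih =>
    simp_rw [Finset.sum_insert hi]
    exact (h i (Finset.mem_insert_self i s)).add
      (ih fun j hj => h j (Finset.mem_insert_of_mem hj))

lemma mul (hf : simeqTo f a A) (hg : simeqTo g b B) :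
    simeqTo (fun ε => f ε * g ε) (a * b) (A + B) := by
  induction A with
  | top => exact Or.inl ⟨top_add B, by filter_upwards [hf.eventually_eq_zero] with ε h; simp [h]⟩
  | coe r =>
  induction B with
  | top => exact Or.inl ⟨add_top _, by filter_upwards [hg.eventually_eq_zero] with ε h; simp [h]⟩
  | coe s =>
    refine of_tendsto ((hf.tendsto.mul hg.tendsto).congr' ?_)
    filter_upwards [self_mem_nhdsWithin] with ε (hε : 0 < ε)
    rw [Real.rpow_add hε, Complex.ofReal_mul, mul_div_mul_comm]

lemma one : simeqTo (fun _ => 1) 1 0 :=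
  of_tendsto (r := 0) (by simp)

lemma prod {ι : Type*} (s : Finset ι) {f : ι → ℝ → ℂ} {a : ι → ℂ} {A : ι → WithTop ℝ}
    (h : ∀ i ∈ s, simeqTo (f i) (a i) (A i)) :
    simeqTo (fun ε => ∏ i ∈ s, f i ε) (∏ i ∈ s, a i) (∑ i ∈ s, A i) := by
  classical
  induction s using Finset.induction_on with
  | empty => simpa using one
  | insert i s hi ih =>
    simp_rw [Finset.prod_insert hi, Finset.sum_insert hi]
    exact (h i (Finset.mem_insert_self i s)).mul
      (ih fun j hj => h j (Finset.mem_insert_of_mem hj))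

lemma of_le (h : simeqTo f a A) {M : WithTop ℝ} (hM : M ≤ A) :
    simeqTo f (if A = M then a else 0) M := by
  split_ifs with hAM
  · exact hAM ▸ h
  induction M with
  | top => exact absurd (top_le_iff.mp hM) hAM
  | coe r =>
  induction A with
  | top => exact of_eventually_eq_zero h.eventually_eq_zero r
  | coe s =>
    have hrs : 0 < s - r :=
      sub_pos.2 (lt_of_le_of_ne (WithTop.coe_le_coe.mp hM) fun e => hAM (by rw [e]))
    have hpow : Tendsto (fun ε : ℝ => ((ε ^ (s - r) : ℝ) : ℂ)) (𝓝[>] 0) (𝓝 0) := by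
      have := (Real.continuous_rpow_const hrs.le).tendsto 0
      rw [Real.zero_rpow hrs.ne'] at this
      exact ((Complex.continuous_ofReal.tendsto 0).comp this).mono_left nhdsWithin_le_nhds
    refine of_tendsto ?_
    simpa using (h.tendsto.mul hpow).congr' (by
      filter_upwards [self_mem_nhdsWithin] with ε (hε : 0 < ε)
      have : ((ε ^ s : ℝ) : ℂ) ≠ 0 := by exact_mod_cast (Real.rpow_pos_of_pos hε s).ne'
      rw [Real.rpow_sub hε, Complex.ofReal_div, mul_div_assoc', div_mul_cancel₀ _ this])

end simeqTo

def initSeg (n m : ℕ) : Finset (Fin n) := {i | (i : ℕ) < m}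

@[simp] lemma mem_initSeg {n m : ℕ} {i : Fin n} : i ∈ initSeg n m ↔ (i : ℕ) < m := by
  simp [initSeg]

@[simp] lemma initSeg_zero (n : ℕ) : initSeg n 0 = ∅ := by ext; simp

@[simp] lemma initSeg_self (n : ℕ) : initSeg n n = univ := by ext i; simp [i.2]

lemma le_of_mem_initSeg {n m : ℕ} {i : Fin n} (hi : i ∈ initSeg n m) (hm : m - 1 < n) :
    i ≤ ⟨m - 1, hm⟩ := by
  rw [Fin.le_def]
  have := mem_initSeg.mp hi
  simp only
  omega

lemma initSeg_succ {n m : ℕ} (h : m < n) : initSeg n (m + 1) = insert ⟨m, h⟩ (initSeg n m) := by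
  ext i
  simp only [mem_initSeg, mem_insert, Fin.ext_iff]
  omega

lemma card_initSeg {n m : ℕ} (h : m ≤ n) : #(initSeg n m) = m := by
  induction m with
  | zero => simp
  | succ m ih => rw [initSeg_succ h, card_insert_of_notMem (by simp), ih (by omega)]

lemma sum_initSeg_succ {M : Type*} [AddCommMonoid M] {n m : ℕ} (Y : Fin n → M) (h : m < n) :
    ∑ i ∈ initSeg n (m + 1), Y i = Y ⟨m, h⟩ + ∑ i ∈ initSeg n m, Y i := by
  rw [initSeg_succ h, sum_insert (by simp)]

lemma exists_mem_le_val {n m : ℕ} {t : Finset (Fin n)} (ht : #t = m + 1) :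
    ∃ k ∈ t, m ≤ (k : ℕ) := by
  have hne : t.Nonempty := card_pos.mp (by omega)
  refine ⟨t.max' hne, max'_mem t hne, ?_⟩
  have := card_le_card (show t ⊆ Iic (t.max' hne) from fun i hi => mem_Iic.mpr (le_max' t i hi))
  rw [Fin.card_Iic, ht] at this
  omega

section Monotone

variable {M : Type*} [AddCommMonoid M] [PartialOrder M] [IsOrderedAddMonoid M]
  {n : ℕ} {Y : Fin n → M}

lemma sum_initSeg_le_sum (hY : Monotone Y) {m : ℕ} {t : Finset (Fin n)} (ht : #t = m) :
    ∑ i ∈ initSeg n m, Y i ≤ ∑ i ∈ t, Y i := by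
  induction m generalizing t with
  | zero => simp [card_eq_zero.mp ht]
  | succ m ih =>
    obtain ⟨k, hkt, hmk⟩ := exists_mem_le_val ht
    rw [sum_initSeg_succ Y (by omega), ← add_sum_erase t Y hkt]
    exact add_le_add (hY (Fin.mk_le_of_le_val hmk)) (ih (by rw [card_erase_of_mem hkt, ht]; rfl))

end Monotone

lemma sum_initSeg_lt_sum {n m : ℕ} {Y : Fin n → WithTop ℝ} (hY : Monotone Y) (h0 : 0 < m)
    (hm : m < n) (hjump : Y ⟨m - 1, (Nat.sub_le m 1).trans_lt hm⟩ < Y ⟨m, hm⟩)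
    {t : Finset (Fin n)} (ht : #t = m) (hne : t ≠ initSeg n m) :
    ∑ i ∈ initSeg n m, Y i < ∑ i ∈ t, Y i := by
  obtain ⟨k, hkt, hmk⟩ : ∃ k ∈ t, m ≤ (k : ℕ) := by
    by_contra! h
    exact hne (eq_of_subset_of_card_le (fun i hi => mem_initSeg.mpr (h i hi))
      (by rw [card_initSeg hm.le, ht]))
  obtain ⟨m, rfl⟩ : ∃ l, m = l + 1 := ⟨m - 1, by omega⟩
  have hfin : ∑ i ∈ initSeg n m, Y i ≠ ⊤ := by
    refine WithTop.sum_ne_top.mpr fun i hi => ne_top_of_lt (lt_of_le_of_lt (hY ?_) hjump)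
    exact le_of_mem_initSeg (mem_initSeg.mpr (Nat.lt_succ_of_lt (mem_initSeg.mp hi))) _
  rw [sum_initSeg_succ Y (by omega), ← add_sum_erase t Y hkt]
  exact WithTop.add_lt_add_of_lt_of_le hfin (lt_of_lt_of_le hjump (hY (Fin.mk_le_of_le_val hmk)))
    (sum_initSeg_le_sum hY (by rw [card_erase_of_mem hkt, ht]; rfl))

lemma tropEval_sum_initSeg {n : ℕ} {Y : Fin n → WithTop ℝ} (hY : Monotone Y) (z : ℝ) :
    tropEval (fun j => ∑ i ∈ initSeg n (n - j), Y i) n z = ∑ i, min (z : WithTop ℝ) (Y i) := by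
  have hlin : ∀ s : Finset (Fin n),
      ((((#s : ℕ) : ℝ) * z : ℝ) : WithTop ℝ) = ∑ _i ∈ s, (z : WithTop ℝ) := fun s => by
    rw [sum_const, ← WithTop.coe_nsmul, nsmul_eq_mul]
  apply le_antisymm
  · set B : Finset (Fin n) := {i | Y i ≤ z}
    have hcard (s : Finset (Fin n)) : #s ≤ n := (card_le_univ s).trans_eq (Fintype.card_fin n)
    have hB : n - #Bᶜ = #B := by rw [card_compl, Fintype.card_fin, Nat.sub_sub_self (hcard B)]
    calc tropEval _ n z ≤ ∑ i ∈ initSeg n (n - #Bᶜ), Y i + (((#Bᶜ : ℕ) : ℝ) * z : ℝ) :=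
          inf_le (mem_range.mpr (Nat.lt_succ_of_le (hcard Bᶜ)))
      _ ≤ ∑ i ∈ B, Y i + ∑ i ∈ Bᶜ, (z : WithTop ℝ) := by
          rw [hlin, hB]
          exact add_le_add_left (sum_initSeg_le_sum hY rfl) _
      _ = ∑ i, min (z : WithTop ℝ) (Y i) := by
          rw [← sum_add_sum_compl B]
          congr 1 <;> refine sum_congr rfl fun i hi => ?_
          · exact (min_eq_right (mem_filter.mp hi).2).symm
          · exact (min_eq_left (le_of_lt (not_le.mp (by simpa [B] using hi)))).symm
  · refine Finset.le_inf fun k hk => ?_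
    have hk : #(initSeg n (n - k))ᶜ = k := by
      rw [card_compl, Fintype.card_fin, card_initSeg (Nat.sub_le n k)]
      have := mem_range.mp hk
      omega
    have hkz := hlin (initSeg n (n - k))ᶜ
    rw [hk] at hkz
    beta_reduce
    rw [hkz, ← sum_add_sum_compl (initSeg n (n - k))]
    exact add_le_add (sum_le_sum fun i _ => min_le_right _ _)
      (sum_le_sum fun i _ => min_le_left _ _)

open Polynomial in
lemma coeff_eq_neg_one_pow_mul_esymm {R : Type*} [CommRing R] [IsDomain R] {n : ℕ}
    {c : ℕ → R} {r : Fin n → R} (hc : c n = 1)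
    (hroots : (∑ j ∈ range (n + 1), C (c j) * X ^ j).roots = ↑(List.ofFn r))
    {j : ℕ} (hj : j ≤ n) :
    c j = (-1) ^ (n - j) * ∑ t ∈ powersetCard (n - j) univ, ∏ i ∈ t, r i := by
  set Q := ∑ j ∈ range (n + 1), C (c j) * X ^ j
  have hcoeff : ∀ k ≤ n, Q.coeff k = c k := fun k hk => by
    simp [Q, coeff_X_pow, Nat.lt_succ_of_le hk]
  have hdeg : Q.natDegree = n := by
    refine le_antisymm (natDegree_sum_le_of_forall_le _ _ fun k hk => ?_)
      (le_natDegree_of_ne_zero (by rw [hcoeff n le_rfl, hc]; exact one_ne_zero))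
    rw [mem_range, Nat.lt_succ_iff] at hk
    exact (natDegree_C_mul_le _ _).trans (by rwa [natDegree_X_pow])
  have hcard : Q.roots.card = Q.natDegree := by rw [hroots, hdeg]; simp
  have hlead : Q.leadingCoeff = 1 := by rw [leadingCoeff, hdeg, hcoeff n le_rfl, hc]
  rw [← hcoeff j hj, coeff_eq_esymm_roots_of_card hcard (hdeg ▸ hj), hlead, one_mul, hdeg, hroots,
    ← Fin.univ_val_map, esymm_map_val]

/-- The coefficient of `ε ^ (Y₁ + ⋯ + Yₘ)` in `eₘ(𝒴(ε))`. -/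
noncomputable def esymmLeadCoeff {n : ℕ} (y : Fin n → ℂ) (Y : Fin n → WithTop ℝ) (m : ℕ) : ℂ :=
  ∑ t ∈ powersetCard m univ,
    if ∑ i ∈ t, Y i = ∑ i ∈ initSeg n m, Y i then ∏ i ∈ t, y i else 0

lemma simeqTo_esymm {n : ℕ} {Yb : Fin n → ℝ → ℂ} {y : Fin n → ℂ} {Y : Fin n → WithTop ℝ}
    (hY : Monotone Y) (h : ∀ i, simeqTo (Yb i) (y i) (Y i)) (m : ℕ) :
    simeqTo (fun ε => ∑ t ∈ powersetCard m univ, ∏ i ∈ t, Yb i ε) (esymmLeadCoeff y Y m)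
      (∑ i ∈ initSeg n m, Y i) :=
  simeqTo.sum _ fun t ht => (simeqTo.prod t fun i _ => h i).of_le
    (sum_initSeg_le_sum hY (mem_powersetCard_univ.mp ht))

lemma esymmLeadCoeff_ne_zero {n m : ℕ} {y : Fin n → ℂ} {Y : Fin n → WithTop ℝ} (hm : m ≤ n)
    (hy : ∀ i ∈ initSeg n m, y i ≠ 0)
    (hmin : ∀ t ∈ powersetCard m univ, t ≠ initSeg n m →
      ∑ i ∈ initSeg n m, Y i < ∑ i ∈ t, Y i) :
    esymmLeadCoeff y Y m ≠ 0 := by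
  rw [esymmLeadCoeff, sum_eq_single_of_mem _ (mem_powersetCard_univ.mpr (card_initSeg hm))
    fun t ht hne => if_neg (hmin t ht hne).ne', if_pos rfl]
  exact prod_ne_zero_iff.mpr hy

end

/-- Newton–Puiseux with partial information, converse direction: if all the
roots of the monic polynomial `𝒫(ε,·)` are continuous branches with first order
asymptotics `𝒴ⱼ(ε) ∼ yⱼ ε^{Yⱼ}`, `Y₁ ≤ ⋯ ≤ Yₙ`, then the coefficients satisfy
`𝒫ⱼ(ε) ≃ pⱼ ε^{Pⱼ}` with `pₙ = 1`, `Pₙ = 0`, the tropical roots of `P` are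
exactly `(Y₁,…,Yₙ)`, `p₀ ≠ 0` or `P₀ = +∞`, and `p_{n-i} ≠ 0` whenever
`Yᵢ < Yᵢ₊₁`. -/
theorem stmt_14 (n : ℕ) (F : ℕ → ℝ → ℂ)
    (hmonic : ∀ ε : ℝ, F n ε = 1)
    (Yb : Fin n → ℝ → ℂ) (y : Fin n → ℂ) (Y : Fin n → WithTop ℝ)
    (hYmono : Monotone Y)
    (hasym : ∀ i, firstOrder (Yb i) (y i) (Y i))
    (ε₁ : ℝ) (hε₁ : 0 < ε₁)
    (hroots : ∀ ε ∈ Set.Ioo (0 : ℝ) ε₁,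
      (∑ j ∈ Finset.range (n + 1), Polynomial.C (F j ε) * Polynomial.X ^ j).roots =
        (↑(List.ofFn fun i => Yb i ε) : Multiset ℂ)) :
    ∃ (p : ℕ → ℂ) (P : ℕ → WithTop ℝ),
      (∀ j ≤ n, simeqTo (F j) (p j) (P j)) ∧
      p n = 1 ∧ P n = 0 ∧
      (∀ z : ℝ, tropEval P n z = P n + ∑ i : Fin n, min (z : WithTop ℝ) (Y i)) ∧
      (p 0 ≠ 0 ∨ P 0 = ⊤) ∧
      ∀ i : ℕ, ∀ h1 : 0 < i, ∀ h2 : i < n,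
        Y ⟨i - 1, by omega⟩ < Y ⟨i, h2⟩ → p (n - i) ≠ 0 := by
  set P : ℕ → WithTop ℝ := fun j => ∑ i ∈ initSeg n (n - j), Y i
  have hPn : P n = 0 := by simp [P]
  have hy : ∀ i, Y i ≠ ⊤ → y i ≠ 0 := fun i => (hasym i).2
  refine ⟨fun j => (-1) ^ (n - j) * esymmLeadCoeff y Y (n - j), P, fun j hj => ?_, by
    simp [esymmLeadCoeff], hPn, fun z => by rw [hPn, zero_add, tropEval_sum_initSeg hYmono], ?_, ?_⟩
  · refine ((simeqTo_esymm hYmono (fun i => (hasym i).1) (n - j)).const_mul _).congr' ?_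
    filter_upwards [Ioo_mem_nhdsGT hε₁] with ε hε
    exact (coeff_eq_neg_one_pow_mul_esymm (hmonic ε) (hroots ε hε) hj).symm
  · refine or_iff_not_imp_right.mpr fun hP0 => mul_ne_zero (by simp) ?_
    refine esymmLeadCoeff_ne_zero (Nat.sub_le n 0) (fun i _ => hy i fun hi => hP0 ?_) ?_
    · exact WithTop.sum_eq_top.mpr ⟨i, by simp, hi⟩
    · intro t ht hne
      simp only [Nat.sub_zero, initSeg_self] at ht hne
      exact absurd (Finset.eq_univ_of_card t (by simpa using Finset.mem_powersetCard_univ.mp ht))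
        hne
  · intro i h0 hi hjump
    refine mul_ne_zero (by simp) ?_
    rw [Nat.sub_sub_self hi.le]
    refine esymmLeadCoeff_ne_zero hi.le (fun k hk => hy k (ne_top_of_lt (?_ : Y k < ⊤))) fun t ht =>
      sum_initSeg_lt_sum hYmono h0 hi hjump (Finset.mem_powersetCard_univ.mp ht)
    exact lt_of_le_of_lt (hYmono (le_of_mem_initSeg hk _)) (lt_of_lt_of_le hjump le_top)
end

section
/- Let \(B\in(\mathbb R\cup\{+\infty\})^{n\times n}\) with \(\mathrm{per}\,B=0\), suppose (0,0) (the zero vectors) is a Hungarian pair with respect to B, and suppose the identity permutation is optimal for B. Then all diagonal entries of B are 0 (so 0 is a min-plus eigenvector: \(\min_j B_{ij}=0\) for each i), the minimal circuit mean of B equals 0, and Opt(B) equals the critical graph of B (the union of all circuits of mean weight 0). -/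
/-!
With the zero vectors Hungarian, `B ≥ 0` and `per B = 0`, so a permutation is optimal exactly when
all its arcs have weight `0`; optimality of the identity makes the diagonal zero. Every circuit
mean is then `≥ 0` and the loops attain `0`. An arc `σ i` of an optimal `σ` lies on the cycle of
`σ` through `i`, a zero circuit. Conversely, if a zero arc `(i, j)` lies on a closed zero walk,
a shortest zero walk from `j` back to `i` repeats no vertex, so together with `(i, j)` it is an
elementary zero cycle; the cyclic permutation along it, which fixes all other indices (zero
diagonal), is optimal and maps `i` to `j`.
-/

open scoped Classical

/-- The min-plus permanent `per B = min_σ ∑ᵢ B_{i σ(i)}`. -/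
noncomputable def mpPer (n : ℕ) (B : Matrix (Fin n) (Fin n) (WithTop ℝ)) : WithTop ℝ :=
  (Finset.univ : Finset (Equiv.Perm (Fin n))).inf fun σ => ∑ i, B i (σ i)

/-- `(i,j)` is an arc of `Opt(B)`: some optimal permutation maps `i` to `j`. -/
def OptArc (n : ℕ) (B : Matrix (Fin n) (Fin n) (WithTop ℝ)) (i j : Fin n) : Prop :=
  ∃ σ : Equiv.Perm (Fin n), (∑ k, B k (σ k)) = mpPer n B ∧ σ i = j

section Walks

variable {α : Type*} {R : α → α → Prop}

lemma exists_walk_of_apply_eq {g : ℕ → α} {m a b : ℕ} (hg : ∀ i < m, R (g i) (g (i + 1)))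
    (hab : a < b) (hbm : b ≤ m) (heq : g a = g b) :
    ∃ g' : ℕ → α, g' 0 = g 0 ∧ g' (m - (b - a)) = g m ∧
      ∀ i < m - (b - a), R (g' i) (g' (i + 1)) := by
  refine ⟨fun i => g (if i < a then i else i + (b - a)), ?_, ?_, fun i hi => ?_⟩
  · dsimp only
    split_ifs with h
    · rfl
    · obtain rfl : a = 0 := by omega
      simpa using heq.symm
  · dsimp only
    rw [if_neg (by omega), Nat.sub_add_cancel (by omega)]
  · dsimp only
    rcases lt_trichotomy (i + 1) a with h | h | h
    · rw [if_pos (by omega), if_pos h]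
      exact hg i (by omega)
    · rw [if_pos (by omega), if_neg (by omega), show i + 1 + (b - a) = b by omega, ← heq, ← h]
      exact hg i (by omega)
    · rw [if_neg (by omega), if_neg (by omega), show i + 1 + (b - a) = i + (b - a) + 1 by omega]
      exact hg _ (by omega)

lemma exists_injOn_walk (g : ℕ → α) (m : ℕ) (hg : ∀ i < m, R (g i) (g (i + 1))) :
    ∃ (g' : ℕ → α) (m' : ℕ), g' 0 = g 0 ∧ g' m' = g m ∧
      (∀ i < m', R (g' i) (g' (i + 1))) ∧ Set.InjOn g' (Set.Iic m') := by
  induction m using Nat.strong_induction_on generalizing g with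
  | _ m ih =>
  by_cases hinj : Set.InjOn g (Set.Iic m)
  · exact ⟨g, m, rfl, rfl, hg, hinj⟩
  obtain ⟨a, b, hab, hbm, heq⟩ : ∃ a b, a < b ∧ b ≤ m ∧ g a = g b := by
    simp only [Set.InjOn, Set.mem_Iic, not_forall] at hinj
    obtain ⟨x, hx, y, hy, hxy, hne⟩ := hinj
    rcases lt_or_gt_of_ne hne with h | h
    exacts [⟨x, y, h, hy, hxy⟩, ⟨y, x, h, hx, hxy.symm⟩]
  obtain ⟨g₁, h0, hm, hg₁⟩ := exists_walk_of_apply_eq hg hab hbm heq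
  obtain ⟨g', m', h0', hm', hg', hinj'⟩ := ih _ (by omega) g₁ hg₁
  exact ⟨g', m', h0'.trans h0, hm'.trans hm, hg', hinj'⟩

lemma exists_perm_of_injOn_walk [DecidableEq α] (hR : ∀ x, R x x) {g : ℕ → α} {m : ℕ}
    (hg : ∀ i < m, R (g i) (g (i + 1))) (hinj : Set.InjOn g (Set.Iic m))
    (hclose : R (g m) (g 0)) :
    ∃ σ : Equiv.Perm α, (∀ x, R x (σ x)) ∧ σ (g m) = g 0 := by
  set L := (List.range (m + 1)).map g
  have hL : L.Nodup := List.nodup_range.map_on fun x hx y hy hxy =>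
    hinj (Nat.lt_succ_iff.mp (List.mem_range.mp hx)) (Nat.lt_succ_iff.mp (List.mem_range.mp hy)) hxy
  have hσ : ∀ i ≤ m, L.formPerm (g i) = g ((i + 1) % (m + 1)) := fun i hi => by
    have h := List.formPerm_apply_getElem L hL i (by simp [L]; omega)
    simp only [L, List.getElem_map, List.getElem_range, List.length_map, List.length_range] at h
    exact h
  refine ⟨L.formPerm, fun x => ?_, by simpa using hσ m le_rfl⟩
  by_cases hx : x ∈ L
  · obtain ⟨i, hi, rfl⟩ := List.mem_map.mp hx
    have hi : i ≤ m := Nat.lt_succ_iff.mp (List.mem_range.mp hi)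
    rw [hσ i hi]
    rcases hi.lt_or_eq with h | rfl
    · rw [Nat.mod_eq_of_lt (by omega)]
      exact hg i h
    · simpa using hclose
  · rw [List.formPerm_apply_of_notMem hx]
    exact hR x

lemma exists_perm_apply_eq_of_walk [DecidableEq α] (hR : ∀ x, R x x) {x y : α} (hxy : R x y)
    {g : ℕ → α} {m : ℕ} (hg : ∀ i < m, R (g i) (g (i + 1))) (h0 : g 0 = y) (hm : g m = x) :
    ∃ σ : Equiv.Perm α, (∀ z, R z (σ z)) ∧ σ x = y := by
  obtain ⟨g', m', h0', hm', hg', hinj⟩ := exists_injOn_walk g m hg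
  obtain ⟨σ, hσ, hσm⟩ := exists_perm_of_injOn_walk hR hg' hinj (by rwa [h0', hm', h0, hm])
  exact ⟨σ, hσ, by rwa [hm', h0', h0, hm] at hσm⟩

lemma exists_perm_apply_eq_of_cyclic_walk [DecidableEq α] (hR : ∀ x, R x x) {f : ℕ → α}
    {k : ℕ} (hf : ∀ l < k, R (f l) (f ((l + 1) % k))) {l : ℕ} (hl : l < k) :
    ∃ σ : Equiv.Perm α, (∀ z, R z (σ z)) ∧ σ (f l) = f ((l + 1) % k) := by
  refine exists_perm_apply_eq_of_walk hR (hf l hl) (g := fun i => f ((l + 1 + i) % k))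
    (m := k - 1) (fun i _ => ?_) (by simp) ?_
  · have h := hf ((l + 1 + i) % k) (Nat.mod_lt _ (by omega))
    rwa [Nat.mod_add_mod] at h
  · rw [show l + 1 + (k - 1) = l + k by omega, Nat.add_mod_right, Nat.mod_eq_of_lt hl]

end Walks

lemma Equiv.Perm.exists_iterate_succ_mod_eq {α : Type*} [Fintype α] (σ : Equiv.Perm α)
    (x : α) :
    ∃ k, 1 ≤ k ∧ k ≤ Fintype.card α ∧ ∀ l, σ^[(l + 1) % k] x = σ (σ^[l] x) :=
  ⟨Function.minimalPeriod σ x,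
    Function.minimalPeriod_pos_of_mem_periodicPts (σ.injective.mem_periodicPts x),
    Function.minimalPeriod_le_card,
    fun l => by rw [Function.iterate_mod_minimalPeriod_eq, Function.iterate_succ_apply']⟩

lemma WithTop.zero_le_map_div {x : WithTop ℝ} (hx : 0 ≤ x) {c : ℝ} (hc : 0 ≤ c) :
    0 ≤ WithTop.map (fun r => r / c) x := by
  induction x with
  | top => simp
  | coe r =>
    rw [WithTop.map_coe, WithTop.coe_nonneg]
    exact div_nonneg (WithTop.coe_nonneg.mp hx) hc

lemma sum_eq_mpPer_iff {n : ℕ} {B : Matrix (Fin n) (Fin n) (WithTop ℝ)} (hper : mpPer n B = 0)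
    (hpos : ∀ i j, 0 ≤ B i j) (σ : Equiv.Perm (Fin n)) :
    (∑ i, B i (σ i)) = mpPer n B ↔ ∀ i, B i (σ i) = 0 := by
  simp [hper, Finset.sum_eq_zero_iff_of_nonneg fun i _ => hpos i (σ i)]

/-- If `per B = 0`, the pair of zero vectors is Hungarian (i.e. all entries of
`B` are `≥ 0`) and the identity permutation is optimal, then all diagonal
entries of `B` vanish (so the zero vector is a min-plus eigenvector:
`minⱼ B_{ij} = 0` for all `i`), the minimal circuit mean of `B` is `0`, and
`Opt(B)` coincides with the critical graph of `B` (the union of all circuits of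
weight, equivalently mean weight, `0`). -/
theorem stmt_17 (n : ℕ) (hn : 0 < n) (B : Matrix (Fin n) (Fin n) (WithTop ℝ))
    (hper : mpPer n B = 0)
    (hpos : ∀ i j, (0 : WithTop ℝ) ≤ B i j)
    (hid : (∑ i, B i i) = mpPer n B) :
    (∀ i, B i i = 0) ∧
    (∀ i, ((Finset.univ : Finset (Fin n)).inf fun j => B i j) = 0) ∧
    IsLeast {t : WithTop ℝ | ∃ k : ℕ, 1 ≤ k ∧ k ≤ n ∧ ∃ f : ℕ → Fin n,
        t = WithTop.map (fun r : ℝ => r / (k : ℝ))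
          (∑ j ∈ Finset.range k, B (f j) (f ((j + 1) % k)))} 0 ∧
    (∀ i j, OptArc n B i j ↔
      ∃ k : ℕ, 1 ≤ k ∧ k ≤ n ∧ ∃ f : ℕ → Fin n,
        (∑ l ∈ Finset.range k, B (f l) (f ((l + 1) % k))) = 0 ∧
        ∃ l, l < k ∧ f l = i ∧ f ((l + 1) % k) = j) := by
  have hdiag : ∀ i, B i i = 0 := (sum_eq_mpPer_iff hper hpos 1).1 hid
  have hzero : ∀ {k} {f : ℕ → Fin n},
      (∑ l ∈ Finset.range k, B (f l) (f ((l + 1) % k))) = 0 ↔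
        ∀ l < k, B (f l) (f ((l + 1) % k)) = 0 := by
    simp [Finset.sum_eq_zero_iff_of_nonneg fun _ _ => hpos _ _]
  refine ⟨hdiag, fun i => ?_, ⟨?_, ?_⟩, fun i j => ?_⟩
  · exact le_antisymm ((Finset.inf_le (Finset.mem_univ i)).trans_eq (hdiag i))
      (Finset.le_inf fun j _ => hpos i j)
  · exact ⟨1, le_rfl, hn, fun _ => ⟨0, hn⟩, by simp [hdiag]⟩
  · rintro t ⟨k, -, -, f, rfl⟩
    exact WithTop.zero_le_map_div (Finset.sum_nonneg fun _ _ => hpos _ _) k.cast_nonneg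
  simp only [OptArc, sum_eq_mpPer_iff hper hpos]
  constructor
  · rintro ⟨σ, hσ, rfl⟩
    obtain ⟨k, hk1, hkn, hiter⟩ := σ.exists_iterate_succ_mod_eq i
    refine ⟨k, hk1, by simpa using hkn, fun l => σ^[l] i,
      hzero.2 fun l _ => by rw [hiter]; exact hσ _, 0, hk1, rfl, by simpa using hiter 0⟩
  · rintro ⟨k, -, -, f, hsum, l, hl, rfl, rfl⟩
    exact exists_perm_apply_eq_of_cyclic_walk (R := fun a b => B a b = 0) hdiag
      (hzero.1 hsum) hl
end
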